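/- arXiv:2412.14041 — 7 statements merged into one kernel-verified Lean document; each statement's English description precedes it below -/
import Mathlib

section
/- Let Y be a nontrivial complex Banach space, let M : Y → Y be a map with M 0 = 0, and let L : Y →L[ℂ] Y be a continuous linear operator whose spectral radius satisfies spectralRadius ℂ L > 1. Assume there exist p > 1, C > 0 and r₀ > 0 such that ‖M y − L y‖ ≤ C·‖y‖^p for all y with ‖y‖ ≤ r₀. Then 0 is an unstable fixed point of M: there exists ε₀ > 0 such that for every η > 0 and every N₀ ∈ ℕ there exist n ≥ N₀ and y ∈ Y with ‖y‖ < η and ‖M^[n] y‖ ≥ ε₀ (where M^[n] denotes the n-th iterate of M). -/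
/-!
Take `μ` on the boundary of the spectrum of `L` with `|μ|` equal to the spectral radius
`r > 1`. Boundary points of the spectrum are approximate eigenvalues, so there are vectors `z`
of any size with `L z ≈ μ z`. Compare the orbit `Mᵏ z` with `μᵏ z`: the difference obeys
`eₖ₊₁ = L eₖ + Eₖ`, where the error `Eₖ` collects the nonlinearity `M - L` (of order
`|z|ᵖ rᵖᵏ`) and the eigenvector defect. By Gelfand's formula `‖Lᵐ‖ ≲ bᵐ` for any `b > r`;
taking `r < b < rᵖ`, the propagated nonlinear errors sum to `≲ |z|ᵖ rᵖᵏ`, which stays below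
`|z| rᵏ / 4` as long as `|z| rᵏ` is small, and a defect small enough for the horizon `n`
contributes another `|z| rᵏ / 4`. Hence `|Mⁿ z| ≥ |z| rⁿ / 2`, and choosing `|z| = s / rⁿ` for a
fixed small `s` gives points arbitrarily close to `0` whose `n`-th iterate has norm `≥ s / 2`.
-/

open Filter Topology Finset

namespace spectrum

variable {A : Type*} [NormedRing A] [CompleteSpace A]

theorem inv_norm_resolvent_le {𝕜 : Type*} [NormedField 𝕜] [NormedAlgebra 𝕜 A] [NormOneClass A]
    {a : A} {μ ν : 𝕜} (hμ : μ ∈ spectrum 𝕜 a) (hν : ν ∉ spectrum 𝕜 a) :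
    ‖resolvent a ν‖⁻¹ ≤ ‖ν - μ‖ := by
  rw [spectrum.notMem_iff] at hν
  by_contra! h
  have hinv : ((hν.unit⁻¹ : Aˣ) : A) = resolvent a ν := by
    rw [resolvent, ← Ring.inverse_unit, IsUnit.unit_spec]
  refine hμ (Units.ofNearby hν.unit (algebraMap 𝕜 A μ - a) ?_).isUnit
  rwa [IsUnit.unit_spec, sub_sub_sub_cancel_right, ← map_sub, norm_algebraMap', norm_sub_rev, hinv]

variable [NormedAlgebra ℂ A]

theorem exists_mem_frontier_nnnorm_eq_spectralRadius [Nontrivial A] (a : A) :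
    ∃ μ ∈ frontier (spectrum ℂ a), (‖μ‖₊ : ENNReal) = spectralRadius ℂ a := by
  obtain ⟨μ, hμ, hmax⟩ := Complex.exists_mem_frontier_isMaxOn_norm (f := id)
    (spectrum.isBounded a) (spectrum.nonempty a) differentiable_id.diffContOnCl
  rw [(spectrum.isClosed a).closure_eq] at hmax
  exact ⟨μ, hμ, le_antisymm (le_iSup₂ (α := ENNReal) μ ((spectrum.isClosed a).frontier_subset hμ))
    (iSup₂_le fun k hk => by exact_mod_cast hmax hk)⟩

theorem exists_norm_pow_le_mul_pow_of_spectralRadius_lt (a : A) {b : ℝ}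
    (hb : spectralRadius ℂ a < ENNReal.ofReal b) : ∃ K > 0, ∀ n : ℕ, ‖a ^ n‖ ≤ K * b ^ n := by
  have hb0 : 0 < b := ENNReal.ofReal_pos.mp (bot_le.trans_lt hb)
  have hev : ∀ᶠ n : ℕ in atTop, ‖a ^ n‖ ≤ 1 * ‖b ^ n‖ := by
    filter_upwards [(pow_norm_pow_one_div_tendsto_nhds_spectralRadius a).eventually_lt_const hb,
      eventually_gt_atTop 0] with n hn hn0
    rw [ENNReal.ofReal_lt_ofReal_iff hb0, one_div, Real.rpow_inv_lt_iff_of_pos (norm_nonneg _)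
      hb0.le (by positivity), Real.rpow_natCast] at hn
    rw [one_mul, Real.norm_of_nonneg (by positivity)]
    exact hn.le
  obtain ⟨K, hK, hbound⟩ :=
    Asymptotics.bound_of_isBigO_nat_atTop (Asymptotics.IsBigO.of_bound 1 hev)
  exact ⟨K, hK, fun n => by simpa [abs_of_pos hb0] using hbound (pow_ne_zero n hb0.ne')⟩

end spectrum

theorem geom_sum₂_le_div {R : Type*} [Field R] [LinearOrder R] [IsStrictOrderedRing R] {x y : R}
    (hy : 0 ≤ y) (hyx : y < x) (n : ℕ) :
    ∑ i ∈ range n, x ^ i * y ^ (n - 1 - i) ≤ x ^ n / (x - y) := by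
  rw [le_div_iff₀ (sub_pos.mpr hyx), geom_sum₂_mul]
  linarith [pow_nonneg hy n]

theorem mul_rpow_mul_geom_sum₂_le {p b r s t c : ℝ} {k : ℕ} (hp : 1 ≤ p) (hb : 0 ≤ b)
    (hbp : b < r ^ p) (hr : 0 ≤ r) (ht : 0 ≤ t) (hc : 0 ≤ c) (hts : t * r ^ k ≤ s)
    (hsmall : c * s ^ (p - 1) ≤ (r ^ p - b) / 4) :
    c * t ^ p * ∑ j ∈ range k, (r ^ p) ^ j * b ^ (k - 1 - j) ≤ t * r ^ k / 4 := by
  have hgap : 0 < r ^ p - b := by linarith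
  have hsplit : (t * r ^ k) ^ (p - 1) * (t * r ^ k) = t ^ p * (r ^ p) ^ k := by
    rw [← Real.rpow_add_one' (by positivity) (by linarith), sub_add_cancel,
      Real.mul_rpow ht (by positivity), Real.rpow_pow_comm hr]
  calc c * t ^ p * ∑ j ∈ range k, (r ^ p) ^ j * b ^ (k - 1 - j)
      ≤ c * t ^ p * ((r ^ p) ^ k / (r ^ p - b)) := by
        gcongr; exact geom_sum₂_le_div hb hbp k
    _ = c * (t * r ^ k) ^ (p - 1) * (t * r ^ k) / (r ^ p - b) := by
        rw [mul_assoc c ((t * r ^ k) ^ (p - 1)), hsplit]; ring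
    _ ≤ c * s ^ (p - 1) * (t * r ^ k) / (r ^ p - b) := by gcongr
    _ ≤ (r ^ p - b) / 4 * (t * r ^ k) / (r ^ p - b) := by gcongr
    _ = t * r ^ k / 4 := by field_simp

theorem mul_geom_sum₂_le_of_le_mul_div_pow {b r c t : ℝ} {k n : ℕ} (hr : 0 ≤ r) (hrb : r < b)
    (ht : 0 ≤ t) (hct : 0 ≤ c * t) (hk : k ≤ n) (hcb : c ≤ (b - r) / 4 * (r / b) ^ n) :
    c * t * ∑ j ∈ range k, r ^ j * b ^ (k - 1 - j) ≤ t * r ^ k / 4 := by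
  have hb : 0 < b := by linarith
  have hbr : 0 < b - r := by linarith
  calc c * t * ∑ j ∈ range k, r ^ j * b ^ (k - 1 - j)
      ≤ c * t * (b ^ k / (b - r)) := by
        rw [geom_sum₂_comm]; gcongr; exact geom_sum₂_le_div hr hrb k
    _ ≤ (b - r) / 4 * (r / b) ^ n * t * (b ^ k / (b - r)) := by gcongr
    _ ≤ (b - r) / 4 * (r / b) ^ k * t * (b ^ k / (b - r)) := by
        gcongr (b - r) / 4 * ?_ * t * _
        exact pow_le_pow_of_le_one (by positivity) (div_le_one_of_le₀ hrb.le hb.le) hk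
    _ = t * r ^ k / 4 := by rw [div_pow]; field_simp

theorem exists_pos_le_and_mul_rpow_le {q c a ρ : ℝ} (hq : 0 < q) (ha : 0 < a) (hρ : 0 < ρ) :
    ∃ s > 0, s ≤ ρ ∧ c * s ^ q ≤ a := by
  have h : Tendsto (fun s : ℝ => c * s ^ q) (𝓝[>] 0) (𝓝 0) := by
    have := (Real.continuousAt_rpow_const 0 q (Or.inr hq.le)).tendsto.const_mul c
    rw [Real.zero_rpow hq.ne', mul_zero] at this
    exact this.mono_left nhdsWithin_le_nhds
  exact (eventually_mem_nhdsWithin.and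
    ((eventually_nhdsWithin_of_eventually_nhds (eventually_le_nhds hρ)).and
      (h.eventually (eventually_le_nhds ha)))).exists

namespace ContinuousLinearMap

variable {𝕜 E : Type*} [NormedAddCommGroup E]

def IsApproxEigenvalue [NormedField 𝕜] [NormedSpace 𝕜 E] (T : E →L[𝕜] E) (μ : 𝕜) : Prop :=
  ∀ δ > 0, ∃ x ≠ 0, ‖T x - μ • x‖ ≤ δ * ‖x‖

/-- The resolvent blows up near the spectrum (`spectrum.inv_norm_resolvent_le`), so a vector
nearly attaining `‖(ν - T)⁻¹‖` for `ν ∉ σ(T)` close to `μ` is an approximate eigenvector. -/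
theorem isApproxEigenvalue_of_mem_frontier_spectrum [DenselyNormedField 𝕜]
    [NormedSpace 𝕜 E] [CompleteSpace E] [Nontrivial E] {T : E →L[𝕜] E} {μ : 𝕜}
    (hμ : μ ∈ frontier (spectrum 𝕜 T)) : T.IsApproxEigenvalue μ := by
  rw [frontier_eq_closure_inter_closure, (spectrum.isClosed T).closure_eq] at hμ
  obtain ⟨hμσ, hμρ⟩ := hμ
  intro δ hδ
  obtain ⟨ν, hν, hνμ⟩ := Metric.mem_closure_iff.mp hμρ (δ / 3) (by positivity)
  rw [dist_comm, dist_eq_norm] at hνμ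
  set R := resolvent T ν
  have hR : ‖R‖⁻¹ ≤ ‖ν - μ‖ := spectrum.inv_norm_resolvent_le hμσ hν
  have hR0 : 0 < ‖R‖ :=
    norm_pos_iff.mpr (spectrum.isUnit_resolvent.mp (spectrum.notMem_iff.mp hν)).ne_zero
  obtain ⟨u, hu, hRu⟩ := R.exists_lt_apply_of_lt_opNorm (half_lt_self hR0)
  have hRu0 : 0 < ‖R u‖ := (half_pos hR0).trans hRu
  have hinv : (algebraMap 𝕜 _ ν - T) (R u) = u := by
    simpa [R, resolvent] using congr($(Ring.mul_inverse_cancel _ (spectrum.notMem_iff.mp hν)) u)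
  refine ⟨R u, norm_pos_iff.mp hRu0, ?_⟩
  have hu' : ‖u‖ ≤ 2 * ‖ν - μ‖ * ‖R u‖ := by
    calc ‖u‖ ≤ 1 := hu.le
      _ = 2 * ‖R‖⁻¹ * (‖R‖ / 2) := by field_simp
      _ ≤ 2 * ‖ν - μ‖ * ‖R u‖ := by gcongr
  calc ‖T (R u) - μ • R u‖ = ‖(ν - μ) • R u - (algebraMap 𝕜 _ ν - T) (R u)‖ := by
        congr 1; simp only [sub_apply, algebraMap_apply, sub_smul]; abel
    _ = ‖(ν - μ) • R u - u‖ := by rw [hinv]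
    _ ≤ ‖ν - μ‖ * ‖R u‖ + 2 * ‖ν - μ‖ * ‖R u‖ := by
        rw [← norm_smul]; exact (norm_sub_le _ _).trans (by gcongr)
    _ ≤ δ * ‖R u‖ := by nlinarith

theorem IsApproxEigenvalue.exists_norm_eq [RCLike 𝕜] [NormedSpace 𝕜 E]
    {T : E →L[𝕜] E} {μ : 𝕜} (h : T.IsApproxEigenvalue μ) {δ t : ℝ} (hδ : 0 < δ) (ht : 0 ≤ t) :
    ∃ x, ‖x‖ = t ∧ ‖T x - μ • x‖ ≤ δ * ‖x‖ := by
  obtain ⟨x, hx0, hx⟩ := h δ hδ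
  have hx0' : ‖x‖ ≠ 0 := norm_ne_zero_iff.mpr hx0
  refine ⟨((t / ‖x‖ : ℝ) : 𝕜) • x, ?_, ?_⟩
  · rw [norm_smul, RCLike.norm_ofReal, abs_of_nonneg (by positivity), div_mul_cancel₀ _ hx0']
  · rw [map_smul, smul_comm μ, ← smul_sub, norm_smul, norm_smul, mul_left_comm]
    gcongr

section

variable [NontriviallyNormedField 𝕜] [NormedSpace 𝕜 E]

theorem eq_sum_pow_apply_of_forall_succ_eq (L : E →L[𝕜] E) {e f : ℕ → E} (h0 : e 0 = 0)
    (hsucc : ∀ k, e (k + 1) = L (e k) + f k) (k : ℕ) :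
    e k = ∑ j ∈ range k, (L ^ (k - 1 - j)) (f j) := by
  induction k with
  | zero => simp [h0]
  | succ k ih =>
    rw [hsucc, ih, map_sum, sum_range_succ, Nat.add_sub_cancel, Nat.sub_self, pow_zero]
    congr 1
    refine sum_congr rfl fun j hj => ?_
    rw [show k - j = k - 1 - j + 1 by have := mem_range.mp hj; omega, pow_succ']
    rfl

theorem norm_iterate_sub_pow_smul_le_sum (M : E → E) (L : E →L[𝕜] E) (μ : 𝕜) (z : E) (k : ℕ) :
    ‖M^[k] z - μ ^ k • z‖ ≤ ∑ j ∈ range k, ‖L ^ (k - 1 - j)‖ *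
      (‖M (M^[j] z) - L (M^[j] z)‖ + ‖μ‖ ^ j * ‖L z - μ • z‖) := by
  rw [L.eq_sum_pow_apply_of_forall_succ_eq (e := fun k => M^[k] z - μ ^ k • z)
    (f := fun j => (M (M^[j] z) - L (M^[j] z)) + μ ^ j • (L z - μ • z)) (by simp) (fun j => ?_) k]
  · refine (norm_sum_le _ _).trans (sum_le_sum fun j _ => (le_opNorm _ _).trans ?_)
    gcongr
    exact (norm_add_le _ _).trans_eq (by rw [norm_smul, norm_pow])
  · simp only [Function.iterate_succ_apply', map_sub, map_smul, smul_sub, pow_succ, mul_smul]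
    abel

variable {M : E → E} {L : E →L[𝕜] E} {μ : 𝕜} {z : E} {p C r₀ K b δ s : ℝ} {n : ℕ}

theorem norm_sub_add_norm_pow_mul_le (hp : 0 ≤ p) (hC : 0 ≤ C)
    (hML : ∀ y, ‖y‖ ≤ r₀ → ‖M y - L y‖ ≤ C * ‖y‖ ^ p) (hz : ‖L z - μ • z‖ ≤ δ * ‖z‖) {j : ℕ}
    (hj : ‖M^[j] z - μ ^ j • z‖ ≤ ‖z‖ * ‖μ‖ ^ j / 2) (hr₀ : 2 * (‖z‖ * ‖μ‖ ^ j) ≤ r₀) :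
    ‖M (M^[j] z) - L (M^[j] z)‖ + ‖μ‖ ^ j * ‖L z - μ • z‖ ≤
      C * 2 ^ p * ‖z‖ ^ p * (‖μ‖ ^ p) ^ j + δ * ‖z‖ * ‖μ‖ ^ j := by
  have hy : ‖M^[j] z‖ ≤ 2 * (‖z‖ * ‖μ‖ ^ j) := by
    have := norm_le_norm_add_norm_sub' (M^[j] z) (μ ^ j • z)
    rw [norm_smul, norm_pow] at this
    nlinarith [norm_nonneg z, pow_nonneg (norm_nonneg μ) j]
  have hpow : (2 * (‖z‖ * ‖μ‖ ^ j)) ^ p = 2 ^ p * ‖z‖ ^ p * (‖μ‖ ^ p) ^ j := by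
    rw [Real.mul_rpow (by norm_num) (by positivity), Real.mul_rpow (by positivity) (by positivity),
      Real.rpow_pow_comm (norm_nonneg μ), mul_assoc]
  calc ‖M (M^[j] z) - L (M^[j] z)‖ + ‖μ‖ ^ j * ‖L z - μ • z‖
      ≤ C * (2 * (‖z‖ * ‖μ‖ ^ j)) ^ p + ‖μ‖ ^ j * (δ * ‖z‖) := by
        gcongr
        exact (hML _ (hy.trans hr₀)).trans (by gcongr)
    _ = C * 2 ^ p * ‖z‖ ^ p * (‖μ‖ ^ p) ^ j + δ * ‖z‖ * ‖μ‖ ^ j := by rw [hpow]; ring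

theorem norm_iterate_sub_pow_smul_le (hp : 1 ≤ p) (hC : 0 ≤ C)
    (hML : ∀ y, ‖y‖ ≤ r₀ → ‖M y - L y‖ ≤ C * ‖y‖ ^ p) (hK : ∀ k, ‖L ^ k‖ ≤ K * b ^ k)
    (hμ : 1 ≤ ‖μ‖) (hμb : ‖μ‖ < b) (hbp : b < ‖μ‖ ^ p) (hz : ‖L z - μ • z‖ ≤ δ * ‖z‖)
    (hs : 2 * s ≤ r₀) (hsmall : K * C * 2 ^ p * s ^ (p - 1) ≤ (‖μ‖ ^ p - b) / 4)
    (hδ : K * δ ≤ (b - ‖μ‖) / 4 * (‖μ‖ / b) ^ n) (hzn : ‖z‖ * ‖μ‖ ^ n ≤ s) :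
    ∀ k ≤ n, ‖M^[k] z - μ ^ k • z‖ ≤ ‖z‖ * ‖μ‖ ^ k / 2 := by
  set r := ‖μ‖
  set t := ‖z‖
  have hK0 : 0 ≤ K := by simpa using (norm_nonneg _).trans (hK 0)
  have hsize : ∀ k ≤ n, t * r ^ k ≤ s := fun k hk =>
    (mul_le_mul_of_nonneg_left (pow_le_pow_right₀ hμ hk) (norm_nonneg z)).trans hzn
  intro k
  induction k using Nat.strong_induction_on with
  | _ k ih =>
  intro hk
  calc ‖M^[k] z - μ ^ k • z‖
      ≤ ∑ j ∈ range k, K * b ^ (k - 1 - j) * (C * 2 ^ p * t ^ p * (r ^ p) ^ j + δ * t * r ^ j) := by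
        refine (norm_iterate_sub_pow_smul_le_sum M L μ z k).trans (sum_le_sum fun j hj => ?_)
        have hjk := mem_range.mp hj
        exact mul_le_mul (hK _) (norm_sub_add_norm_pow_mul_le (by linarith) hC hML hz
          (ih j hjk (by omega)) (by linarith [hsize j (by omega)])) (by positivity)
          (mul_nonneg hK0 (pow_nonneg (by linarith) _))
    _ = K * C * 2 ^ p * t ^ p * ∑ j ∈ range k, (r ^ p) ^ j * b ^ (k - 1 - j) +
          K * δ * t * ∑ j ∈ range k, r ^ j * b ^ (k - 1 - j) := by
        rw [mul_sum, mul_sum, ← sum_add_distrib]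
        exact sum_congr rfl fun j _ => by ring
    _ ≤ t * r ^ k / 4 + t * r ^ k / 4 := by
        gcongr
        · exact mul_rpow_mul_geom_sum₂_le hp (by linarith) hbp (norm_nonneg μ) (norm_nonneg z)
            (by positivity) (hsize k hk) hsmall
        · exact mul_geom_sum₂_le_of_le_mul_div_pow (norm_nonneg μ) hμb (norm_nonneg z)
            (by rw [mul_assoc]; exact mul_nonneg hK0 ((norm_nonneg _).trans hz)) hk hδ
    _ = t * r ^ k / 2 := by ring

theorem norm_mul_pow_div_two_le_norm_iterate (hp : 1 ≤ p) (hC : 0 ≤ C)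
    (hML : ∀ y, ‖y‖ ≤ r₀ → ‖M y - L y‖ ≤ C * ‖y‖ ^ p) (hK : ∀ k, ‖L ^ k‖ ≤ K * b ^ k)
    (hμ : 1 ≤ ‖μ‖) (hμb : ‖μ‖ < b) (hbp : b < ‖μ‖ ^ p) (hz : ‖L z - μ • z‖ ≤ δ * ‖z‖)
    (hs : 2 * s ≤ r₀) (hsmall : K * C * 2 ^ p * s ^ (p - 1) ≤ (‖μ‖ ^ p - b) / 4)
    (hδ : K * δ ≤ (b - ‖μ‖) / 4 * (‖μ‖ / b) ^ n) (hzn : ‖z‖ * ‖μ‖ ^ n ≤ s) :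
    ‖z‖ * ‖μ‖ ^ n / 2 ≤ ‖M^[n] z‖ := by
  have hclose := norm_iterate_sub_pow_smul_le hp hC hML hK hμ hμb hbp hz hs hsmall hδ hzn n le_rfl
  have := norm_sub_norm_le (μ ^ n • z) (μ ^ n • z - M^[n] z)
  rw [sub_sub_cancel, norm_sub_rev, norm_smul, norm_pow, mul_comm] at this
  linarith

end

end ContinuousLinearMap

theorem henry_perez_wreszinski_instability_general
    {Y : Type*} [NormedAddCommGroup Y] [NormedSpace ℂ Y] [CompleteSpace Y] [Nontrivial Y]
    (M : Y → Y) (L : Y →L[ℂ] Y) (hrad : 1 < spectralRadius ℂ L)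
    (p C r₀ : ℝ) (hp : 1 < p) (hC : 0 < C) (hr₀ : 0 < r₀)
    (hML : ∀ y : Y, ‖y‖ ≤ r₀ → ‖M y - L y‖ ≤ C * ‖y‖ ^ p) :
    ∃ ε₀ > (0 : ℝ), ∀ η > (0 : ℝ), ∀ N₀ : ℕ,
      ∃ n ≥ N₀, ∃ y : Y, ‖y‖ < η ∧ ε₀ ≤ ‖M^[n] y‖ := by
  obtain ⟨μ, hμ, hμρ⟩ := spectrum.exists_mem_frontier_nnnorm_eq_spectralRadius L
  set r := ‖μ‖
  have hr : 1 < r := by rw [← hμρ] at hrad; exact_mod_cast hrad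
  have hrp : r < r ^ p := by simpa using Real.rpow_lt_rpow_of_exponent_lt hr hp
  obtain ⟨b, hrb, hbp⟩ := exists_between hrp
  have hb : spectralRadius ℂ L < ENNReal.ofReal b := by
    rw [← hμρ, ← ENNReal.ofReal_coe_nnreal, coe_nnnorm,
      ENNReal.ofReal_lt_ofReal_iff (by linarith)]
    exact hrb
  obtain ⟨K, hK0, hK⟩ := spectrum.exists_norm_pow_le_mul_pow_of_spectralRadius_lt L hb
  obtain ⟨s, hs0, hsr₀, hsmall⟩ := exists_pos_le_and_mul_rpow_le (c := K * C * 2 ^ p)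
    (sub_pos.mpr hp) (by linarith : 0 < (r ^ p - b) / 4) (half_pos hr₀)
  refine ⟨s / 2, half_pos hs0, fun η hη N₀ => ?_⟩
  obtain ⟨n, hnη, hn⟩ := (((tendsto_const_nhds (x := s)).div_atTop
    (tendsto_pow_atTop_atTop_of_one_lt hr)).eventually (gt_mem_nhds hη)).and
      (eventually_ge_atTop N₀) |>.exists
  obtain ⟨z, hz, hLz⟩ := (ContinuousLinearMap.isApproxEigenvalue_of_mem_frontier_spectrum hμ
    ).exists_norm_eq (δ := (b - r) / 4 * (r / b) ^ n / K) (t := s / r ^ n)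
    (div_pos (mul_pos (by linarith) (pow_pos (div_pos (by linarith) (by linarith)) n)) hK0)
    (by positivity)
  refine ⟨n, hn, z, hz ▸ hnη, ?_⟩
  have hzn : ‖z‖ * r ^ n = s := by rw [hz, div_mul_cancel₀ _ (by positivity)]
  have := ContinuousLinearMap.norm_mul_pow_div_two_le_norm_iterate hp.le hC.le hML hK hr.le hrb
    hbp hLz (by linarith) hsmall (mul_div_cancel₀ _ hK0.ne').le hzn.le
  rwa [hzn] at this

/-- **Henry–Perez–Wreszinski instability theorem.** If `M : Y → Y` fixes the origin and
is approximated near `0` to order `p > 1` by a continuous linear operator `L` with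
spectral radius greater than one, then `0` is an unstable fixed point of `M`. -/
theorem henry_perez_wreszinski_instability
    {Y : Type*} [NormedAddCommGroup Y] [NormedSpace ℂ Y] [CompleteSpace Y] [Nontrivial Y]
    (M : Y → Y) (hM0 : M 0 = 0) (L : Y →L[ℂ] Y) (hrad : 1 < spectralRadius ℂ L)
    (p C r₀ : ℝ) (hp : 1 < p) (hC : 0 < C) (hr₀ : 0 < r₀)
    (hML : ∀ y : Y, ‖y‖ ≤ r₀ → ‖M y - L y‖ ≤ C * ‖y‖ ^ p) :
    ∃ ε₀ > (0 : ℝ), ∀ η > (0 : ℝ), ∀ N₀ : ℕ,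
      ∃ n ≥ N₀, ∃ y : Y, ‖y‖ < η ∧ ε₀ ≤ ‖M^[n] y‖ :=
  henry_perez_wreszinski_instability_general M L hrad p C r₀ hp hC hr₀ hML
end

section
/- Let Y be a nontrivial complex Banach space, Ω ⊆ Y an open set, φ ∈ Ω, and S : Y → Y a map which is twice continuously (Fréchet) differentiable on Ω (ContDiffOn ℂ 2 S Ω) with S φ = φ. If there exists μ ∈ spectrum ℂ (fderiv ℂ S φ) with ‖μ‖ > 1, then φ is an unstable fixed point of S: there exists ε₀ > 0 such that for every δ > 0 there exist y ∈ Y with ‖y − φ‖ < δ and n ∈ ℕ with ‖S^[n] y − φ‖ ≥ ε₀. -/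
/-!
If the fixed point `φ` were stable, then for some radii `δ, r > 0` every iterate `S^[n]` would be
holomorphic on `ball φ δ` and map it into `closedBall φ r`. The Schwarz lemma then bounds
`‖(fderiv ℂ S φ) ^ n‖ = ‖fderiv ℂ S^[n] φ‖` by `r / δ` uniformly in `n`, whereas `μ ^ n` lies in
the spectrum of `(fderiv ℂ S φ) ^ n`, so `‖μ‖ ^ n ≤ ‖(fderiv ℂ S φ) ^ n‖ * ‖1‖` is unbounded.
-/

open Metric Set Filter Topology

def IsLyapunovStable {E : Type*} [SeminormedAddCommGroup E] (f : E → E) (x : E) : Prop :=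
  ∀ ε > (0 : ℝ), ∃ δ > (0 : ℝ), ∀ y : E, ‖y - x‖ < δ → ∀ n : ℕ, ‖f^[n] y - x‖ < ε

theorem spectrum.norm_le_one_of_bddAbove_norm_pow {𝕜 A : Type*} [NormedField 𝕜] [NormedRing A]
    [NormedAlgebra 𝕜 A] [CompleteSpace A] {a : A} (ha : BddAbove (range fun n : ℕ ↦ ‖a ^ n‖))
    {k : 𝕜} (hk : k ∈ spectrum 𝕜 a) : ‖k‖ ≤ 1 := by
  obtain ⟨C, hC⟩ := ha
  by_contra! hk1
  obtain ⟨n, hn⟩ := pow_unbounded_of_one_lt (C * ‖(1 : A)‖) hk1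
  have hkn : ‖k‖ ^ n ≤ ‖a ^ n‖ * ‖(1 : A)‖ := by
    simpa only [norm_pow] using spectrum.norm_le_norm_mul_of_mem (spectrum.pow_mem_pow a n hk)
  have haC : ‖a ^ n‖ ≤ C := hC (mem_range_self n)
  exact hn.not_ge (hkn.trans (mul_le_mul_of_nonneg_right haC (norm_nonneg _)))

section Holomorphic

variable {E : Type*} [NormedAddCommGroup E] [NormedSpace ℂ E]

theorem norm_fderiv_pow_le_div_of_mapsTo_ball {f : E → E} {s : Set E} {x : E} {δ r : ℝ}
    (hd : DifferentiableOn ℂ f s) (hs : MapsTo f s s) (hball : ball x δ ⊆ s) (hδ : 0 < δ)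
    (hfix : f x = x) (horbit : ∀ n, MapsTo f^[n] (ball x δ) (closedBall x r)) (n : ℕ) :
    ‖fderiv ℂ f x ^ n‖ ≤ r / δ := by
  have hdx : HasFDerivAt f (fderiv ℂ f x) x :=
    (hd.differentiableAt (mem_of_superset (ball_mem_nhds x hδ) hball)).hasFDerivAt
  rw [← (hdx.iterate hfix n).fderiv]
  refine Complex.norm_fderiv_le_div_of_mapsTo_ball ((hd.iterate hs n).mono hball) ?_ hδ
  rw [Function.iterate_fixed hfix n]
  exact horbit n

theorem IsLyapunovStable.bddAbove_norm_fderiv_pow {f : E → E} {x : E}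
    (hstab : IsLyapunovStable f x) (hfix : f x = x) (hd : ∀ᶠ y in 𝓝 x, DifferentiableAt ℂ f y) :
    BddAbove (range fun n : ℕ ↦ ‖fderiv ℂ f x ^ n‖) := by
  obtain ⟨r, hr, hdr⟩ := eventually_nhds_iff_ball.mp hd
  obtain ⟨δ, hδ, hδr⟩ := hstab r hr
  -- the points whose whole forward orbit stays in `ball x r` form an invariant set
  set s := {y | ∀ n, f^[n] y ∈ ball x r}
  have horbit : ∀ n, MapsTo f^[n] (ball x δ) (ball x r) := fun n y hy ↦ by
    rw [mem_ball, dist_eq_norm] at hy ⊢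
    exact hδr y hy n
  have hds : DifferentiableOn ℂ f s := fun y hy ↦
    (hdr y (hy 0)).differentiableWithinAt
  have hs : MapsTo f s s := fun y hy n ↦ by
    simpa only [← Function.iterate_succ_apply] using hy (n + 1)
  refine ⟨r / δ, forall_mem_range.mpr fun n ↦ ?_⟩
  exact norm_fderiv_pow_le_div_of_mapsTo_ball hds hs (fun y hy n ↦ horbit n hy) hδ hfix
    (fun n ↦ (horbit n).mono_right ball_subset_closedBall) n

theorem IsLyapunovStable.norm_le_one_of_mem_spectrum_fderiv [CompleteSpace E] {f : E → E} {x : E}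
    (hstab : IsLyapunovStable f x) (hfix : f x = x) (hd : ∀ᶠ y in 𝓝 x, DifferentiableAt ℂ f y)
    {μ : ℂ} (hμ : μ ∈ spectrum ℂ (fderiv ℂ f x)) : ‖μ‖ ≤ 1 :=
  spectrum.norm_le_one_of_bddAbove_norm_pow (hstab.bddAbove_norm_fderiv_pow hfix hd) hμ

end Holomorphic

theorem instability_of_fixed_point_of_spectral_instability_general
    {Y : Type*} [NormedAddCommGroup Y] [NormedSpace ℂ Y] [CompleteSpace Y]
    (Ω : Set Y) (hΩ : IsOpen Ω) (φ : Y) (hφ : φ ∈ Ω)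
    (S : Y → Y) (hS : ContDiffOn ℂ 2 S Ω) (hfix : S φ = φ)
    (μ : ℂ) (hμ : μ ∈ spectrum ℂ (fderiv ℂ S φ)) (hμ1 : 1 < ‖μ‖) :
    ∃ ε₀ > (0 : ℝ), ∀ δ > (0 : ℝ),
      ∃ y : Y, ‖y - φ‖ < δ ∧ ∃ n : ℕ, ε₀ ≤ ‖S^[n] y - φ‖ := by
  by_contra hunstable
  have hstab : IsLyapunovStable S φ := by
    push Not at hunstable
    exact hunstable
  have hd : ∀ᶠ y in 𝓝 φ, DifferentiableAt ℂ S y := by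
    filter_upwards [hΩ.mem_nhds hφ] with y hy
    exact (hS.contDiffAt (hΩ.mem_nhds hy)).differentiableAt (by norm_num)
  exact (hstab.norm_le_one_of_mem_spectrum_fderiv hfix hd hμ).not_gt hμ1

/-- If `S` is a `C²` map on an open neighborhood of a fixed point `φ` and the Fréchet
derivative of `S` at `φ` has a spectral element `μ` with `‖μ‖ > 1`, then `φ` is an
unstable fixed point of `S`. -/
theorem instability_of_fixed_point_of_spectral_instability
    {Y : Type*} [NormedAddCommGroup Y] [NormedSpace ℂ Y] [CompleteSpace Y] [Nontrivial Y]
    (Ω : Set Y) (hΩ : IsOpen Ω) (φ : Y) (hφ : φ ∈ Ω)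
    (S : Y → Y) (hS : ContDiffOn ℂ 2 S Ω) (hfix : S φ = φ)
    (μ : ℂ) (hμ : μ ∈ spectrum ℂ (fderiv ℂ S φ)) (hμ1 : 1 < ‖μ‖) :
    ∃ ε₀ > (0 : ℝ), ∀ δ > (0 : ℝ),
      ∃ y : Y, ‖y - φ‖ < δ ∧ ∃ n : ℕ, ε₀ ≤ ‖S^[n] y - φ‖ :=
  instability_of_fixed_point_of_spectral_instability_general Ω hΩ φ hφ S hS hfix μ hμ hμ1
end

section
/- Fix L > 0 and δ ≥ 0. There exists a constant K > 0, depending only on δ and L, such that for every r ∈ ℝ, every t > 0, and every a : ℤ → ℂ with k ↦ (1+|k|²)^r·‖a k‖² summable over ℤ, the function k ↦ (1+|k|²)^{r+δ}·‖exp(−Q(k)·t)·a k‖² is summable and ∑'_{k∈ℤ} (1+|k|²)^{r+δ}·‖exp(−Q(k)·t)·a k‖² ≤ K²·(1 + (1/(2t))^δ)·∑'_{k∈ℤ} (1+|k|²)^r·‖a k‖². (This is the smoothing estimate ‖V(t)φ‖_{r+δ} ≤ K_δ·(1+(2t)^{-δ})^{1/2}·‖φ‖_r for the viscous–dispersive semigroup.)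 -/
open scoped Real

/-- Fourier symbol of the viscous–dispersive operator `∂ₓ³ - ∂ₓ²` on `L`-periodic
functions: `Q(k) = (2π/L)²k² - i(2π/L)³k³`. -/
noncomputable def Q (L : ℝ) (k : ℤ) : ℂ :=
  (((2 * π / L) ^ 2 * (k : ℝ) ^ 2 : ℝ) : ℂ) -
    Complex.I * (((2 * π / L) ^ 3 * (k : ℝ) ^ 3 : ℝ) : ℂ)

/-! The dispersive part `-i(2π/L)³k³` of `Q` is purely imaginary, so `V(t)` damps the `k`-th mode
by exactly `exp(-c k² t)` with `c = (2π/L)²`. The gain of `δ` derivatives then costs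
`sup_{x ≥ 0} (1 + x)^δ exp(-2ctx)`, which is `O(1 + (2t)^{-δ})` because `y^δ e^{-y} ≤ ⌈δ⌉!`. -/

open Real Nat

lemma rpow_le_factorial_ceil_mul_exp {δ y : ℝ} (hδ : 0 ≤ δ) (hy : 0 ≤ y) :
    y ^ δ ≤ (⌈δ⌉₊)! * exp y := by
  rcases le_or_gt y 1 with hy1 | hy1
  · calc y ^ δ ≤ 1 := rpow_le_one hy hy1 hδ
      _ ≤ exp y := one_le_exp hy
      _ ≤ (⌈δ⌉₊)! * exp y :=
        le_mul_of_one_le_left (exp_nonneg y) (by exact_mod_cast (⌈δ⌉₊).factorial_pos)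
  · calc y ^ δ ≤ y ^ ⌈δ⌉₊ := by
          rw [← rpow_natCast]; exact rpow_le_rpow_of_exponent_le hy1.le (le_ceil δ)
      _ ≤ (⌈δ⌉₊)! * exp y :=
        (div_le_iff₀' (by positivity)).1 (pow_div_factorial_le_exp y hy _)

lemma rpow_mul_exp_neg_mul_le {δ s x : ℝ} (hδ : 0 ≤ δ) (hs : 0 < s) (hx : 0 ≤ x) :
    x ^ δ * exp (-(s * x)) ≤ (⌈δ⌉₊)! * s ^ (-δ) := by
  have key := rpow_le_factorial_ceil_mul_exp hδ (mul_nonneg hs.le hx)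
  rw [mul_rpow hs.le hx, ← le_div_iff₀' (rpow_pos_of_pos hs δ)] at key
  calc x ^ δ * exp (-(s * x)) = x ^ δ / exp (s * x) := by rw [exp_neg, div_eq_mul_inv]
    _ ≤ (⌈δ⌉₊)! * exp (s * x) / s ^ δ / exp (s * x) := by gcongr
    _ = (⌈δ⌉₊)! * s ^ (-δ) := by rw [rpow_neg hs.le]; field_simp

lemma one_add_rpow_le_two_rpow_mul {δ x : ℝ} (hδ : 0 ≤ δ) (hx : 0 ≤ x) :
    (1 + x) ^ δ ≤ 2 ^ δ * (1 + x ^ δ) := by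
  have hmax : (1 + x) ^ δ ≤ (2 * max 1 x) ^ δ := by
    gcongr; linarith [le_max_left 1 x, le_max_right 1 x]
  rw [mul_rpow zero_le_two (by positivity)] at hmax
  refine hmax.trans (mul_le_mul_of_nonneg_left ?_ (by positivity))
  rcases le_total 1 x with h | h
  · rw [max_eq_right h]; linarith
  · rw [max_eq_left h, one_rpow]; linarith [rpow_nonneg hx δ]

lemma one_add_rpow_mul_exp_neg_le {δ c t x : ℝ} (hδ : 0 ≤ δ) (hc : 0 < c) (ht : 0 < t)
    (hx : 0 ≤ x) :
    (1 + x) ^ δ * exp (-(2 * t * c * x)) ≤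
      2 ^ δ * (1 + (⌈δ⌉₊)! * c ^ (-δ)) * (1 + (1 / (2 * t)) ^ δ) := by
  have hdecay := rpow_mul_exp_neg_mul_le hδ (mul_pos hc (by positivity : 0 < 2 * t)) hx
  rw [mul_rpow hc.le (by positivity), rpow_neg (by positivity : 0 ≤ 2 * t),
    ← inv_rpow (by positivity), ← one_div, mul_comm c, ← mul_assoc] at hdecay
  set e := exp (-(2 * t * c * x))
  set A : ℝ := (⌈δ⌉₊)! * c ^ (-δ)
  set q := (1 / (2 * t)) ^ δ
  have he : e ≤ 1 := exp_le_one_iff.2 (by simp only [neg_nonpos]; positivity)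
  have hA : 0 ≤ A := by positivity
  have hq : 0 ≤ q := by positivity
  calc (1 + x) ^ δ * e ≤ 2 ^ δ * (1 + x ^ δ) * e := by
        gcongr; exact one_add_rpow_le_two_rpow_mul hδ hx
    _ = 2 ^ δ * (e + x ^ δ * e) := by ring
    _ ≤ 2 ^ δ * (1 + A * q) := by gcongr ?_ * ?_; exact add_le_add he hdecay
    _ ≤ 2 ^ δ * (1 + A) * (1 + q) := by
        nlinarith [mul_nonneg (rpow_pos_of_pos two_pos δ).le (add_nonneg hA hq)]

lemma norm_exp_neg_Q_mul (L t : ℝ) (k : ℤ) :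
    ‖Complex.exp (-Q L k * t)‖ = exp (-((2 * π / L) ^ 2 * (k : ℝ) ^ 2 * t)) := by
  rw [Complex.norm_exp]
  congr 1
  simp only [Q, Complex.neg_re, Complex.neg_im, Complex.mul_re, Complex.mul_im, Complex.sub_re,
    Complex.sub_im, Complex.ofReal_re, Complex.ofReal_im, Complex.I_re, Complex.I_im]
  ring

lemma summable_and_tsum_le_mul_tsum {ι : Type*} {f g : ι → ℝ} {C : ℝ} (hf : ∀ i, 0 ≤ f i)
    (hfg : ∀ i, f i ≤ C * g i) (hg : Summable g) :
    Summable f ∧ ∑' i, f i ≤ C * ∑' i, g i := by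
  have hf_sum : Summable f := hg.mul_left C |>.of_nonneg_of_le hf hfg
  exact ⟨hf_sum, (hf_sum.tsum_le_tsum hfg (hg.mul_left C)).trans_eq tsum_mul_left⟩

noncomputable def smoothingConst (L δ : ℝ) : ℝ :=
  2 ^ δ * (1 + (⌈δ⌉₊)! * ((2 * π / L) ^ 2) ^ (-δ))

lemma smoothingConst_pos (L δ : ℝ) : 0 < smoothingConst L δ := by
  unfold smoothingConst; positivity

lemma one_add_sq_rpow_mul_norm_exp_neg_Q_mul_sq_le {L δ t : ℝ} (hL : L ≠ 0) (hδ : 0 ≤ δ)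
    (ht : 0 < t) (k : ℤ) :
    (1 + |(k : ℝ)| ^ 2) ^ δ * ‖Complex.exp (-Q L k * t)‖ ^ 2 ≤
      smoothingConst L δ * (1 + (1 / (2 * t)) ^ δ) := by
  have hc : 0 < (2 * π / L) ^ 2 := by have := div_ne_zero two_pi_pos.ne' hL; positivity
  have hsq : exp (-((2 * π / L) ^ 2 * (k : ℝ) ^ 2 * t)) ^ 2 =
      exp (-(2 * t * (2 * π / L) ^ 2 * |(k : ℝ)| ^ 2)) := by
    rw [sq_abs, sq, ← exp_add]; ring_nf
  rw [norm_exp_neg_Q_mul, hsq]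
  exact one_add_rpow_mul_exp_neg_le hδ hc ht (by positivity)

/-- Smoothing estimate for the viscous–dispersive semigroup:
`‖V(t)φ‖_{r+δ} ≤ K_δ (1 + (2t)^{-δ})^{1/2} ‖φ‖_r` for all `t > 0`. -/
theorem semigroup_smoothing_estimate (L : ℝ) (hL : 0 < L) (δ : ℝ) (hδ : 0 ≤ δ) :
    ∃ K > (0 : ℝ), ∀ r : ℝ, ∀ t : ℝ, 0 < t → ∀ a : ℤ → ℂ,
      Summable (fun k : ℤ => (1 + |(k : ℝ)| ^ 2) ^ r * ‖a k‖ ^ 2) →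
      Summable (fun k : ℤ =>
        (1 + |(k : ℝ)| ^ 2) ^ (r + δ) * ‖Complex.exp (-Q L k * (t : ℂ)) * a k‖ ^ 2) ∧
      ∑' k : ℤ, (1 + |(k : ℝ)| ^ 2) ^ (r + δ) *
          ‖Complex.exp (-Q L k * (t : ℂ)) * a k‖ ^ 2 ≤
        K ^ 2 * (1 + (1 / (2 * t)) ^ δ) *
          ∑' k : ℤ, (1 + |(k : ℝ)| ^ 2) ^ r * ‖a k‖ ^ 2 := by
  have hB := smoothingConst_pos L δ
  refine ⟨√(smoothingConst L δ), sqrt_pos.2 hB, fun r t ht a ha => ?_⟩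
  rw [sq_sqrt hB.le]
  refine summable_and_tsum_le_mul_tsum (fun k => by positivity) (fun k => ?_) ha
  calc (1 + |(k : ℝ)| ^ 2) ^ (r + δ) * ‖Complex.exp (-Q L k * t) * a k‖ ^ 2
      = ((1 + |(k : ℝ)| ^ 2) ^ δ * ‖Complex.exp (-Q L k * t)‖ ^ 2) *
          ((1 + |(k : ℝ)| ^ 2) ^ r * ‖a k‖ ^ 2) := by
        rw [norm_mul, mul_pow, rpow_add (by positivity)]; ring
    _ ≤ smoothingConst L δ * (1 + (1 / (2 * t)) ^ δ) * ((1 + |(k : ℝ)| ^ 2) ^ r * ‖a k‖ ^ 2) :=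
        mul_le_mul_of_nonneg_right
          (one_add_sq_rpow_mul_norm_exp_neg_Q_mul_sq_le hL.ne' hδ ht k) (by positivity)
end

section
/- Fix L > 0, δ ≥ 0, α ∈ [0,1] and ε > 0. There exists a constant K > 0, depending only on δ, α, ε and L, such that for every r ∈ ℝ, all t, τ ≥ ε, and every a : ℤ → ℂ with k ↦ (1+|k|²)^r·‖a k‖² summable over ℤ, one has ∑'_{k∈ℤ} (1+|k|²)^{r+δ}·‖(exp(−Q(k)·t) − exp(−Q(k)·τ))·a k‖² ≤ K²·|t − τ|^{2α}·∑'_{k∈ℤ} (1+|k|²)^r·‖a k‖². (This is the Hölder continuity estimate ‖V(t)φ − V(τ)φ‖_{r+δ} ≤ K·|t−τ|^α·‖φ‖_r for the viscous–dispersive semigroup, valid for t, τ bounded away from 0.) -/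
open scoped Real

/-!
Write `e^{-Qt} - e^{-Qτ} = e^{-Qt} (1 - e^{-Q(τ-t)})` for `t ≤ τ`. Since
`Re Q(k) = (2π/L)²k² ≥ 0`, the first factor is at most the Gaussian `exp(-(2π/L)²k²ε)`, and
`|1 - e^w| ≤ min(2, 2|w|) ≤ 2|w|^α` for `Re w ≤ 0`. As `|Q(k)|` grows only polynomially in `k`,
the Gaussian absorbs both `|Q(k)|^α` and the weight `(1+k²)^{δ/2}`, so the Fourier multiplier is
bounded by `K |t-τ|^α` uniformly in `k`; the weighted `ℓ²` estimate follows termwise for every `r`.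
-/

open Complex

theorem norm_one_sub_exp_le_two_mul_rpow {w : ℂ} (hw : w.re ≤ 0) {α : ℝ} (hα0 : 0 ≤ α)
    (hα1 : α ≤ 1) : ‖1 - exp w‖ ≤ 2 * ‖w‖ ^ α := by
  rcases le_or_gt ‖w‖ 1 with h | h
  · calc ‖1 - exp w‖ = ‖exp w - 1‖ := norm_sub_rev _ _
      _ ≤ 2 * ‖w‖ := norm_exp_sub_one_le h
      _ ≤ 2 * ‖w‖ ^ α := by gcongr; exact Real.self_le_rpow_of_le_one (norm_nonneg _) h hα1
  · calc ‖1 - exp w‖ ≤ ‖(1 : ℂ)‖ + ‖exp w‖ := norm_sub_le _ _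
      _ ≤ 1 + 1 := by rw [norm_one, norm_exp]; gcongr; exact Real.exp_le_one_iff.mpr hw
      _ ≤ 2 * ‖w‖ ^ α := by linarith [Real.one_le_rpow h.le hα0]

theorem norm_exp_neg_mul_sub_exp_neg_mul_le {z : ℂ} (hz : 0 ≤ z.re) {ε t τ α : ℝ}
    (ht : ε ≤ t) (hτ : ε ≤ τ) (hα0 : 0 ≤ α) (hα1 : α ≤ 1) :
    ‖exp (-z * t) - exp (-z * τ)‖ ≤
      2 * Real.exp (-(z.re * ε)) * (‖z‖ * |t - τ|) ^ α := by
  wlog htτ : t ≤ τ generalizing t τ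
  · rw [norm_sub_rev, abs_sub_comm]
    exact this hτ ht (le_of_not_ge htτ)
  have hsplit :
      exp (-z * t) - exp (-z * τ) = exp (-z * t) * (1 - exp (-z * ↑(τ - t))) := by
    rw [mul_sub, mul_one, ← exp_add]
    push_cast
    ring_nf
  have hnorm : ‖-z * ↑(τ - t)‖ = ‖z‖ * |t - τ| := by
    rw [norm_mul, norm_neg, norm_real, Real.norm_eq_abs, abs_sub_comm]
  rw [hsplit, norm_mul, mul_comm 2, mul_assoc, ← hnorm]
  gcongr
  · rw [norm_exp]
    gcongr
    simpa using mul_le_mul_of_nonneg_left ht hz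
  · refine norm_one_sub_exp_le_two_mul_rpow ?_ hα0 hα1
    simpa using mul_nonneg hz (sub_nonneg.mpr htτ)

theorem exists_rpow_mul_exp_neg_mul_le (p : ℝ) {c : ℝ} (hc : 0 < c) :
    ∃ B > 0, ∀ y ≥ 1, y ^ p * Real.exp (-(c * y)) ≤ B := by
  set n := ⌈p⌉₊
  refine ⟨n.factorial / c ^ n, by positivity, fun y hy => ?_⟩
  have hpow : y ^ p ≤ y ^ n := by
    rw [← Real.rpow_natCast]; exact Real.rpow_le_rpow_of_exponent_le hy (Nat.le_ceil p)
  have hexp : (c * y) ^ n ≤ n.factorial * Real.exp (c * y) := by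
    rw [← div_le_iff₀' (by positivity)]
    exact Real.pow_div_factorial_le_exp (c * y) (by positivity) n
  calc y ^ p * Real.exp (-(c * y)) ≤ y ^ n * Real.exp (-(c * y)) := by gcongr
    _ = (c * y) ^ n / c ^ n * Real.exp (-(c * y)) := by field_simp; ring
    _ ≤ n.factorial * Real.exp (c * y) / c ^ n * Real.exp (-(c * y)) := by gcongr
    _ = n.factorial / c ^ n := by rw [Real.exp_neg]; field_simp

theorem Q_re (L : ℝ) (k : ℤ) : (Q L k).re = (2 * π / L) ^ 2 * (k : ℝ) ^ 2 := by
  simp only [Q, sub_re, mul_re, ofReal_re, ofReal_im, I_re, I_im]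
  ring

theorem Q_im (L : ℝ) (k : ℤ) : (Q L k).im = -((2 * π / L) ^ 3 * (k : ℝ) ^ 3) := by
  simp only [Q, sub_im, mul_im, ofReal_re, ofReal_im, I_re, I_im]
  ring

theorem norm_Q_le {L : ℝ} (hL : 0 < L) (k : ℤ) :
    ‖Q L k‖ ≤ ((2 * π / L) ^ 2 + (2 * π / L) ^ 3) * (1 + (k : ℝ) ^ 2) ^ 2 := by
  have hc : 0 < 2 * π / L := by positivity
  have hk2 : (k : ℝ) ^ 2 ≤ (1 + (k : ℝ) ^ 2) ^ 2 := by nlinarith [sq_nonneg (k : ℝ)]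
  have hk3 : |(k : ℝ)| ^ 3 ≤ (1 + (k : ℝ) ^ 2) ^ 2 := by
    nlinarith [sq_abs (k : ℝ), abs_nonneg (k : ℝ), sq_nonneg (|(k : ℝ)| - 1),
      sq_nonneg (k : ℝ)]
  calc ‖Q L k‖ ≤ |(Q L k).re| + |(Q L k).im| := norm_le_abs_re_add_abs_im _
    _ = (2 * π / L) ^ 2 * (k : ℝ) ^ 2 + (2 * π / L) ^ 3 * |(k : ℝ)| ^ 3 := by
      rw [Q_re, Q_im, abs_neg, abs_of_nonneg (by positivity), abs_mul, abs_pow, abs_pow,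
        abs_of_pos hc]
    _ ≤ _ := by rw [add_mul]; gcongr

theorem exists_rpow_mul_norm_exp_neg_Q_mul_sub_le {L : ℝ} (hL : 0 < L) (δ : ℝ) {α ε : ℝ}
    (hα0 : 0 ≤ α) (hα1 : α ≤ 1) (hε : 0 < ε) :
    ∃ K > 0, ∀ (k : ℤ) (t τ : ℝ), ε ≤ t → ε ≤ τ →
      (1 + (k : ℝ) ^ 2) ^ (δ / 2) * ‖exp (-Q L k * t) - exp (-Q L k * τ)‖ ≤
        K * |t - τ| ^ α := by
  set c := (2 * π / L) ^ 2
  set A := c + (2 * π / L) ^ 3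
  have hc : 0 < c := by positivity
  obtain ⟨B, hB, hdecay⟩ := exists_rpow_mul_exp_neg_mul_le (δ / 2 + 2 * α) (mul_pos hc hε)
  refine ⟨2 * A ^ α * Real.exp (c * ε) * B, by positivity, fun k t τ ht hτ => ?_⟩
  set y := 1 + (k : ℝ) ^ 2 with hy_def
  have hy : 1 ≤ y := le_add_of_nonneg_right (sq_nonneg _)
  have hdiff := norm_exp_neg_mul_sub_exp_neg_mul_le (z := Q L k) (by rw [Q_re]; positivity)
    ht hτ hα0 hα1
  rw [Q_re] at hdiff
  have hQ : ‖Q L k‖ ^ α ≤ A ^ α * y ^ (2 * α) := by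
    rw [Real.rpow_mul (by positivity), Real.rpow_two, ← Real.mul_rpow (by positivity)
      (by positivity)]
    exact Real.rpow_le_rpow (norm_nonneg _) (norm_Q_le hL k) hα0
  have hgauss :
      Real.exp (-(c * (k : ℝ) ^ 2 * ε)) = Real.exp (c * ε) * Real.exp (-(c * ε * y)) := by
    rw [← Real.exp_add, hy_def]; ring_nf
  calc y ^ (δ / 2) * ‖exp (-Q L k * t) - exp (-Q L k * τ)‖
      ≤ y ^ (δ / 2) * (2 * Real.exp (-(c * (k : ℝ) ^ 2 * ε)) * (‖Q L k‖ * |t - τ|) ^ α) := by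
        gcongr
    _ = 2 * Real.exp (c * ε) * ‖Q L k‖ ^ α * (y ^ (δ / 2) * Real.exp (-(c * ε * y))) *
          |t - τ| ^ α := by
        rw [hgauss, Real.mul_rpow (norm_nonneg _) (abs_nonneg _)]; ring
    _ ≤ 2 * Real.exp (c * ε) * (A ^ α * y ^ (2 * α)) *
          (y ^ (δ / 2) * Real.exp (-(c * ε * y))) * |t - τ| ^ α := by gcongr
    _ = 2 * A ^ α * Real.exp (c * ε) * (y ^ (δ / 2 + 2 * α) * Real.exp (-(c * ε * y))) *
          |t - τ| ^ α := by rw [Real.rpow_add (by positivity)]; ring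
    _ ≤ 2 * A ^ α * Real.exp (c * ε) * B * |t - τ| ^ α := by gcongr; exact hdecay y hy

theorem tsum_rpow_add_mul_norm_mul_sq_le {ι 𝕜 : Type*} [NormedDivisionRing 𝕜] {w : ι → ℝ}
    (hw : ∀ i, 0 < w i) {m a : ι → 𝕜} {r δ M : ℝ} (hm : ∀ i, w i ^ (δ / 2) * ‖m i‖ ≤ M)
    (ha : Summable fun i => w i ^ r * ‖a i‖ ^ 2) :
    ∑' i, w i ^ (r + δ) * ‖m i * a i‖ ^ 2 ≤ M ^ 2 * ∑' i, w i ^ r * ‖a i‖ ^ 2 := by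
  have hterm : ∀ i, w i ^ (r + δ) * ‖m i * a i‖ ^ 2 ≤ M ^ 2 * (w i ^ r * ‖a i‖ ^ 2) := by
    intro i
    have hδ : w i ^ δ = (w i ^ (δ / 2)) ^ 2 := by
      rw [← Real.rpow_mul_natCast (hw i).le]; norm_num
    calc w i ^ (r + δ) * ‖m i * a i‖ ^ 2
          = w i ^ r * ‖a i‖ ^ 2 * (w i ^ (δ / 2) * ‖m i‖) ^ 2 := by
          rw [Real.rpow_add (hw i), hδ, norm_mul]; ring
      _ ≤ w i ^ r * ‖a i‖ ^ 2 * M ^ 2 := by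
          have := hw i
          gcongr _ * ?_ ^ 2
          exact hm i
      _ = M ^ 2 * (w i ^ r * ‖a i‖ ^ 2) := mul_comm _ _
  have hbound := ha.mul_left (M ^ 2)
  have hnonneg : ∀ i, 0 ≤ w i ^ (r + δ) * ‖m i * a i‖ ^ 2 := fun i => by
    have := hw i
    positivity
  exact ((hbound.of_nonneg_of_le hnonneg hterm).tsum_le_tsum hterm hbound).trans_eq
    tsum_mul_left

theorem semigroup_holder_continuity_general (L : ℝ) (hL : 0 < L) (δ α ε : ℝ)
    (hα : α ∈ Set.Icc (0 : ℝ) 1) (hε : 0 < ε) :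
    ∃ K > (0 : ℝ), ∀ r t τ : ℝ, ε ≤ t → ε ≤ τ → ∀ a : ℤ → ℂ,
      Summable (fun k : ℤ => (1 + |(k : ℝ)| ^ 2) ^ r * ‖a k‖ ^ 2) →
      ∑' k : ℤ, (1 + |(k : ℝ)| ^ 2) ^ (r + δ) *
          ‖(Complex.exp (-Q L k * (t : ℂ)) - Complex.exp (-Q L k * (τ : ℂ))) * a k‖ ^ 2 ≤
        K ^ 2 * |t - τ| ^ (2 * α) *
          ∑' k : ℤ, (1 + |(k : ℝ)| ^ 2) ^ r * ‖a k‖ ^ 2 := by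
  obtain ⟨K, hK, hmult⟩ := exists_rpow_mul_norm_exp_neg_Q_mul_sub_le hL δ hα.1 hα.2 hε
  refine ⟨K, hK, fun r t τ ht hτ a ha => ?_⟩
  have hsq : K ^ 2 * |t - τ| ^ (2 * α) = (K * |t - τ| ^ α) ^ 2 := by
    rw [mul_pow, ← Real.rpow_mul_natCast (abs_nonneg _)]; ring_nf
  rw [hsq]
  exact tsum_rpow_add_mul_norm_mul_sq_le (fun k => by positivity)
    (fun k => by simpa only [sq_abs] using hmult k t τ ht hτ) ha

/-- Hölder continuity estimate for the viscous–dispersive semigroup: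
`‖V(t)φ − V(τ)φ‖_{r+δ} ≤ K |t−τ|^α ‖φ‖_r` for `t, τ ≥ ε > 0` and any `α ∈ [0,1]`. -/
theorem semigroup_holder_continuity (L : ℝ) (hL : 0 < L) (δ α ε : ℝ)
    (hδ : 0 ≤ δ) (hα : α ∈ Set.Icc (0 : ℝ) 1) (hε : 0 < ε) :
    ∃ K > (0 : ℝ), ∀ r t τ : ℝ, ε ≤ t → ε ≤ τ → ∀ a : ℤ → ℂ,
      Summable (fun k : ℤ => (1 + |(k : ℝ)| ^ 2) ^ r * ‖a k‖ ^ 2) →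
      ∑' k : ℤ, (1 + |(k : ℝ)| ^ 2) ^ (r + δ) *
          ‖(Complex.exp (-Q L k * (t : ℂ)) - Complex.exp (-Q L k * (τ : ℂ))) * a k‖ ^ 2 ≤
        K ^ 2 * |t - τ| ^ (2 * α) *
          ∑' k : ℤ, (1 + |(k : ℝ)| ^ 2) ^ r * ‖a k‖ ^ 2 :=
  semigroup_holder_continuity_general L hL δ α ε hα hε
end

section
/- Let s > 1/2. There exists a constant C > 0, depending only on s, with the following property: for all a, b : ℤ → ℂ such that k ↦ (1+|k|²)^s·‖a k‖² and k ↦ (1+|k|²)^s·‖b k‖² are summable over ℤ, the convolution c : ℤ → ℂ, c k := ∑'_{j∈ℤ} a j · b (k−j), is well defined (for each k the series converges absolutely), the function k ↦ (1+|k|²)^s·‖c k‖² is summable, and ∑'_{k∈ℤ} (1+|k|²)^s·‖c k‖² ≤ C² · (∑'_{k∈ℤ} (1+|k|²)^s·‖a k‖²) · (∑'_{k∈ℤ} (1+|k|²)^s·‖b k‖²). (This is the Fourier-coefficient formulation of the fact that the periodic Sobolev space H^s_per is a Banach algebra for s > 1/2.) -/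
/-!
Put `w k = (1 + k²)^s`. The inequality `1 + (j + l)² ≤ 4 max (1 + j², 1 + l²)` gives
`w k ≤ 4^s (w j + w (k - j))`, hence `w k · ∑ⱼ (w j · w (k - j))⁻¹ ≤ 2 · 4^s · ∑ⱼ (w j)⁻¹`,
which is finite exactly because `2s > 1`. Cauchy–Schwarz with the weights `(w j · w (k - j))⁻¹`
then bounds `w k · |c k|²` by that constant times `∑ⱼ w j |a j|² · w (k - j) |b (k - j)|²`,
and summing over `k` (Fubini after the shear `(k, j) ↦ (j, k - j)`) gives
`‖a‖²_{H^s} ‖b‖²_{H^s}`.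
-/

open Real

section CauchySchwarz

variable {ι : Type*} {r f g : ι → ℝ}

theorem summable_of_sq_le_mul (hf : 0 ≤ f) (hg : 0 ≤ g) (hr : 0 ≤ r)
    (h : ∀ i, r i ^ 2 ≤ f i * g i) (hfs : Summable f) (hgs : Summable g) : Summable r :=
  .of_nonneg_of_le hr (fun i => by linarith [two_mul_le_add_of_sq_le_mul (hf i) (hg i) (h i)])
    ((hfs.add hgs).mul_left (1 / 2))

theorem tsum_sq_le_tsum_mul_tsum_of_sq_le_mul (hf : 0 ≤ f) (hg : 0 ≤ g) (hr : 0 ≤ r)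
    (h : ∀ i, r i ^ 2 ≤ f i * g i) (hfs : Summable f) (hgs : Summable g) :
    (∑' i, r i) ^ 2 ≤ (∑' i, f i) * ∑' i, g i := by
  have hrs := summable_of_sq_le_mul hf hg hr h hfs hgs
  refine le_of_tendsto' (hrs.hasSum.pow 2) fun u => ?_
  calc (∑ i ∈ u, r i) ^ 2 ≤ (∑ i ∈ u, f i) * ∑ i ∈ u, g i :=
        u.sum_sq_le_sum_mul_sum_of_sq_le_mul (fun i _ => hf i) (fun i _ => hg i) fun i _ => h i
    _ ≤ (∑' i, f i) * ∑' i, g i :=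
        mul_le_mul (hfs.sum_le_tsum u fun i _ => hf i) (hgs.sum_le_tsum u fun i _ => hg i)
          (u.sum_nonneg fun i _ => hg i) (tsum_nonneg hf)

end CauchySchwarz

section Convolution

variable {G : Type*} [AddCommGroup G] {A B : G → ℝ}

/-- Carries the fibre `{k} × G` onto the antidiagonal `{(j, l) | j + l = k}`. -/
def convolutionShear (G : Type*) [AddCommGroup G] : G × G ≃ G × G :=
  (Equiv.prodComm G G).trans (Equiv.prodShear (Equiv.refl G) Equiv.subRight)

@[simp]
theorem convolutionShear_apply (p : G × G) : convolutionShear G p = (p.2, p.1 - p.2) := rfl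

theorem hasSum_mul_comp_convolutionShear (hA : Summable A) (hB : Summable B) (hA0 : 0 ≤ A)
    (hB0 : 0 ≤ B) :
    HasSum (fun p : G × G => A p.2 * B (p.1 - p.2)) ((∑' j, A j) * ∑' j, B j) := by
  have := (convolutionShear G).hasSum_iff.2
    (hA.hasSum.mul hB.hasSum (hA.mul_of_nonneg hB hA0 hB0))
  simpa [Function.comp_def] using this

theorem summable_mul_comp_sub (hA : Summable A) (hB : Summable B) (hA0 : 0 ≤ A) (hB0 : 0 ≤ B)
    (k : G) : Summable fun j => A j * B (k - j) :=
  (hasSum_mul_comp_convolutionShear hA hB hA0 hB0).summable.prod_factor k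

theorem hasSum_tsum_mul_comp_sub (hA : Summable A) (hB : Summable B) (hA0 : 0 ≤ A)
    (hB0 : 0 ≤ B) :
    HasSum (fun k => ∑' j, A j * B (k - j)) ((∑' j, A j) * ∑' j, B j) :=
  (hasSum_mul_comp_convolutionShear hA hB hA0 hB0).prod_fiberwise fun k =>
    (summable_mul_comp_sub hA hB hA0 hB0 k).hasSum

end Convolution

section ConvolutionAlgebraWeight

variable {G : Type*} [AddCommGroup G]

structure IsConvolutionAlgebraWeight (c : ℝ) (w : G → ℝ) : Prop where
  pos : ∀ k, 0 < w k
  le_mul_add : ∀ k j, w k ≤ c * (w j + w (k - j))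
  summable_inv : Summable fun k => (w k)⁻¹

namespace IsConvolutionAlgebraWeight

variable {w : G → ℝ} {c : ℝ}

theorem mul_inv_mul_comp_sub_le (hw : IsConvolutionAlgebraWeight c w) (k j : G) :
    w k * (w j * w (k - j))⁻¹ ≤ c * ((w j)⁻¹ + (w (k - j))⁻¹) := by
  have hj := hw.pos j
  have hkj := hw.pos (k - j)
  calc w k * (w j * w (k - j))⁻¹ ≤ c * (w j + w (k - j)) * (w j * w (k - j))⁻¹ := by
        gcongr; exact hw.le_mul_add k j
    _ = c * ((w j)⁻¹ + (w (k - j))⁻¹) := by field_simp; ring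

theorem summable_inv_comp_sub (hw : IsConvolutionAlgebraWeight c w) (k : G) :
    Summable fun j => (w (k - j))⁻¹ :=
  hw.summable_inv.comp_injective sub_right_injective

theorem summable_inv_mul_comp_sub (hw : IsConvolutionAlgebraWeight c w) (k : G) :
    Summable fun j => (w j * w (k - j))⁻¹ := by
  have hdom : Summable fun j => w k * (w j * w (k - j))⁻¹ :=
    ((hw.summable_inv.add (hw.summable_inv_comp_sub k)).mul_left c).of_nonneg_of_le
      (fun j => (mul_pos (hw.pos k) (inv_pos.2 (mul_pos (hw.pos j) (hw.pos _)))).le)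
      (hw.mul_inv_mul_comp_sub_le k)
  simpa [← mul_assoc, inv_mul_cancel₀ (hw.pos k).ne'] using hdom.mul_left (w k)⁻¹

theorem mul_tsum_inv_mul_comp_sub_le (hw : IsConvolutionAlgebraWeight c w) (k : G) :
    w k * ∑' j, (w j * w (k - j))⁻¹ ≤ 2 * c * ∑' j, (w j)⁻¹ := by
  have hshift := hw.summable_inv_comp_sub k
  calc w k * ∑' j, (w j * w (k - j))⁻¹ = ∑' j, w k * (w j * w (k - j))⁻¹ := tsum_mul_left.symm
    _ ≤ ∑' j, c * ((w j)⁻¹ + (w (k - j))⁻¹) :=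
        ((hw.summable_inv_mul_comp_sub k).mul_left _).tsum_le_tsum
          (hw.mul_inv_mul_comp_sub_le k) ((hw.summable_inv.add hshift).mul_left _)
    _ = 2 * c * ∑' j, (w j)⁻¹ := by
        have hreflect : ∑' j, (w (k - j))⁻¹ = ∑' j, (w j)⁻¹ :=
          (Equiv.subLeft k).tsum_eq fun j => (w j)⁻¹
        rw [tsum_mul_left, hw.summable_inv.tsum_add hshift, hreflect]
        ring

end IsConvolutionAlgebraWeight

end ConvolutionAlgebraWeight

theorem one_add_sq_rpow_add_le {s : ℝ} (hs : 0 ≤ s) (x y : ℝ) :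
    (1 + |x + y| ^ 2) ^ s ≤ 4 ^ s * ((1 + |x| ^ 2) ^ s + (1 + |y| ^ 2) ^ s) := by
  simp only [sq_abs]
  have dominated (u v : ℝ) (huv : u ^ 2 ≤ v ^ 2) :
      (1 + (u + v) ^ 2) ^ s ≤ 4 ^ s * (1 + v ^ 2) ^ s := by
    rw [← mul_rpow (by norm_num) (by positivity)]
    exact rpow_le_rpow (by positivity) (by nlinarith [sq_nonneg (u - v)]) hs
  have h4 : (0 : ℝ) ≤ 4 ^ s := by positivity
  have hX : (0 : ℝ) ≤ (1 + x ^ 2) ^ s := by positivity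
  have hY : (0 : ℝ) ≤ (1 + y ^ 2) ^ s := by positivity
  rcases le_total (x ^ 2) (y ^ 2) with h | h
  · nlinarith [dominated x y h]
  · nlinarith [add_comm x y ▸ dominated y x h]

noncomputable def sobolevWeight (s : ℝ) (k : ℤ) : ℝ := (1 + |(k : ℝ)| ^ 2) ^ s

section SobolevWeight

variable {s : ℝ}

theorem sobolevWeight_pos (s : ℝ) (k : ℤ) : 0 < sobolevWeight s k := by
  unfold sobolevWeight; positivity

theorem sobolevWeight_le_add (hs : 0 ≤ s) (k j : ℤ) :
    sobolevWeight s k ≤ 4 ^ s * (sobolevWeight s j + sobolevWeight s (k - j)) := by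
  simpa [sobolevWeight] using one_add_sq_rpow_add_le hs (j : ℝ) ((k - j : ℤ) : ℝ)

theorem summable_inv_sobolevWeight (hs : 1 / 2 < s) :
    Summable fun k : ℤ => (sobolevWeight s k)⁻¹ := by
  refine (summable_abs_int_rpow (by linarith : 1 < 2 * s)).of_norm_bounded_eventually ?_
  filter_upwards [Filter.eventually_cofinite_ne 0] with k hk
  have hk' : (0 : ℝ) < |(k : ℝ)| := abs_pos.2 (Int.cast_ne_zero.2 hk)
  rw [norm_inv, norm_of_nonneg (sobolevWeight_pos s k).le, sobolevWeight,
    ← rpow_neg (by positivity), neg_mul_eq_mul_neg, rpow_mul hk'.le, rpow_two]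
  exact rpow_le_rpow_of_nonpos (by positivity) (by linarith) (by linarith)

theorem isConvolutionAlgebraWeight_sobolevWeight (hs : 1 / 2 < s) :
    IsConvolutionAlgebraWeight (4 ^ s) (sobolevWeight s) :=
  ⟨sobolevWeight_pos s, sobolevWeight_le_add (by linarith), summable_inv_sobolevWeight hs⟩

end SobolevWeight

section WeightedConvolution

variable {G R : Type*} [AddCommGroup G] [NormedRing R] {w : G → ℝ} {c : ℝ} {a b : G → R}

namespace IsConvolutionAlgebraWeight

theorem mul_sq_norm_nonneg (hw : IsConvolutionAlgebraWeight c w) (a : G → R) :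
    0 ≤ fun k => w k * ‖a k‖ ^ 2 :=
  fun k => mul_nonneg (hw.pos k).le (sq_nonneg _)

theorem sq_norm_mul_norm_comp_sub (hw : IsConvolutionAlgebraWeight c w) (k j : G) :
    (‖a j‖ * ‖b (k - j)‖) ^ 2 =
      (w j * w (k - j))⁻¹ * (w j * ‖a j‖ ^ 2 * (w (k - j) * ‖b (k - j)‖ ^ 2)) := by
  have := (hw.pos j).ne'
  have := (hw.pos (k - j)).ne'
  field_simp

theorem summable_norm_mul_norm_comp_sub (hw : IsConvolutionAlgebraWeight c w)
    (ha : Summable fun k => w k * ‖a k‖ ^ 2) (hb : Summable fun k => w k * ‖b k‖ ^ 2) (k : G) :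
    Summable fun j => ‖a j‖ * ‖b (k - j)‖ :=
  summable_of_sq_le_mul (fun j => (inv_pos.2 (mul_pos (hw.pos j) (hw.pos _))).le)
    (fun j => mul_nonneg (hw.mul_sq_norm_nonneg a j) (hw.mul_sq_norm_nonneg b _))
    (fun j => by positivity) (fun j => (hw.sq_norm_mul_norm_comp_sub k j).le)
    (hw.summable_inv_mul_comp_sub k)
    (summable_mul_comp_sub ha hb (hw.mul_sq_norm_nonneg a) (hw.mul_sq_norm_nonneg b) k)

theorem summable_norm_mul_comp_sub (hw : IsConvolutionAlgebraWeight c w)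
    (ha : Summable fun k => w k * ‖a k‖ ^ 2) (hb : Summable fun k => w k * ‖b k‖ ^ 2) (k : G) :
    Summable fun j => ‖a j * b (k - j)‖ :=
  (hw.summable_norm_mul_norm_comp_sub ha hb k).of_nonneg_of_le (fun _ => norm_nonneg _)
    fun _ => norm_mul_le _ _

theorem sq_norm_tsum_mul_comp_sub_le (hw : IsConvolutionAlgebraWeight c w)
    (ha : Summable fun k => w k * ‖a k‖ ^ 2) (hb : Summable fun k => w k * ‖b k‖ ^ 2) (k : G) :
    ‖∑' j, a j * b (k - j)‖ ^ 2 ≤ (∑' j, (w j * w (k - j))⁻¹) *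
      ∑' j, w j * ‖a j‖ ^ 2 * (w (k - j) * ‖b (k - j)‖ ^ 2) := by
  have hnorm : ‖∑' j, a j * b (k - j)‖ ≤ ∑' j, ‖a j‖ * ‖b (k - j)‖ :=
    (norm_tsum_le_tsum_norm (hw.summable_norm_mul_comp_sub ha hb k)).trans
      ((hw.summable_norm_mul_comp_sub ha hb k).tsum_le_tsum (fun _ => norm_mul_le _ _)
        (hw.summable_norm_mul_norm_comp_sub ha hb k))
  calc ‖∑' j, a j * b (k - j)‖ ^ 2 ≤ (∑' j, ‖a j‖ * ‖b (k - j)‖) ^ 2 := by gcongr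
    _ ≤ _ := tsum_sq_le_tsum_mul_tsum_of_sq_le_mul
        (fun j => (inv_pos.2 (mul_pos (hw.pos j) (hw.pos _))).le)
        (fun j => mul_nonneg (hw.mul_sq_norm_nonneg a j) (hw.mul_sq_norm_nonneg b _))
        (fun j => by positivity) (fun j => (hw.sq_norm_mul_norm_comp_sub k j).le)
        (hw.summable_inv_mul_comp_sub k)
        (summable_mul_comp_sub ha hb (hw.mul_sq_norm_nonneg a) (hw.mul_sq_norm_nonneg b) k)

theorem mul_sq_norm_tsum_mul_comp_sub_le (hw : IsConvolutionAlgebraWeight c w)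
    (ha : Summable fun k => w k * ‖a k‖ ^ 2) (hb : Summable fun k => w k * ‖b k‖ ^ 2) (k : G) :
    w k * ‖∑' j, a j * b (k - j)‖ ^ 2 ≤ 2 * c * (∑' j, (w j)⁻¹) *
      ∑' j, w j * ‖a j‖ ^ 2 * (w (k - j) * ‖b (k - j)‖ ^ 2) := by
  have hG : 0 ≤ ∑' j, w j * ‖a j‖ ^ 2 * (w (k - j) * ‖b (k - j)‖ ^ 2) :=
    tsum_nonneg fun j => mul_nonneg (hw.mul_sq_norm_nonneg a j) (hw.mul_sq_norm_nonneg b _)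
  calc w k * ‖∑' j, a j * b (k - j)‖ ^ 2
      ≤ w k * ((∑' j, (w j * w (k - j))⁻¹) *
          ∑' j, w j * ‖a j‖ ^ 2 * (w (k - j) * ‖b (k - j)‖ ^ 2)) :=
        mul_le_mul_of_nonneg_left (hw.sq_norm_tsum_mul_comp_sub_le ha hb k) (hw.pos k).le
    _ ≤ _ := by
        rw [← mul_assoc]
        exact mul_le_mul_of_nonneg_right (hw.mul_tsum_inv_mul_comp_sub_le k) hG

theorem summable_mul_sq_norm_tsum_mul_comp_sub (hw : IsConvolutionAlgebraWeight c w)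
    (ha : Summable fun k => w k * ‖a k‖ ^ 2) (hb : Summable fun k => w k * ‖b k‖ ^ 2) :
    Summable fun k => w k * ‖∑' j, a j * b (k - j)‖ ^ 2 := by
  have hconv :=
    hasSum_tsum_mul_comp_sub ha hb (hw.mul_sq_norm_nonneg a) (hw.mul_sq_norm_nonneg b)
  exact (hconv.summable.mul_left _).of_nonneg_of_le
    (fun k => mul_nonneg (hw.pos k).le (sq_nonneg _)) (hw.mul_sq_norm_tsum_mul_comp_sub_le ha hb)

theorem tsum_mul_sq_norm_tsum_mul_comp_sub_le (hw : IsConvolutionAlgebraWeight c w)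
    (ha : Summable fun k => w k * ‖a k‖ ^ 2) (hb : Summable fun k => w k * ‖b k‖ ^ 2) :
    ∑' k, w k * ‖∑' j, a j * b (k - j)‖ ^ 2 ≤
      2 * c * (∑' j, (w j)⁻¹) * (∑' k, w k * ‖a k‖ ^ 2) * ∑' k, w k * ‖b k‖ ^ 2 := by
  have hconv :=
    hasSum_tsum_mul_comp_sub ha hb (hw.mul_sq_norm_nonneg a) (hw.mul_sq_norm_nonneg b)
  calc ∑' k, w k * ‖∑' j, a j * b (k - j)‖ ^ 2
      ≤ ∑' k, 2 * c * (∑' j, (w j)⁻¹) *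
          ∑' j, w j * ‖a j‖ ^ 2 * (w (k - j) * ‖b (k - j)‖ ^ 2) :=
        (hw.summable_mul_sq_norm_tsum_mul_comp_sub ha hb).tsum_le_tsum
          (hw.mul_sq_norm_tsum_mul_comp_sub_le ha hb) (hconv.summable.mul_left _)
    _ = _ := by rw [tsum_mul_left, hconv.tsum_eq]; ring

end IsConvolutionAlgebraWeight

end WeightedConvolution

/-- Banach algebra property of `H^s_per` for `s > 1/2`, in Fourier-coefficient form:
the convolution of two `H^s`-summable coefficient sequences is well defined,
`H^s`-summable, and its `H^s`-type norm is controlled by the product of the norms. -/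
theorem Hs_banach_algebra_convolution (s : ℝ) (hs : 1 / 2 < s) :
    ∃ C > (0 : ℝ), ∀ a b : ℤ → ℂ,
      Summable (fun k : ℤ => (1 + |(k : ℝ)| ^ 2) ^ s * ‖a k‖ ^ 2) →
      Summable (fun k : ℤ => (1 + |(k : ℝ)| ^ 2) ^ s * ‖b k‖ ^ 2) →
      (∀ k : ℤ, Summable fun j : ℤ => ‖a j * b (k - j)‖) ∧
      Summable (fun k : ℤ =>
        (1 + |(k : ℝ)| ^ 2) ^ s * ‖∑' j : ℤ, a j * b (k - j)‖ ^ 2) ∧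
      ∑' k : ℤ, (1 + |(k : ℝ)| ^ 2) ^ s * ‖∑' j : ℤ, a j * b (k - j)‖ ^ 2 ≤
        C ^ 2 * (∑' k : ℤ, (1 + |(k : ℝ)| ^ 2) ^ s * ‖a k‖ ^ 2) *
          (∑' k : ℤ, (1 + |(k : ℝ)| ^ 2) ^ s * ‖b k‖ ^ 2) := by
  have hw := isConvolutionAlgebraWeight_sobolevWeight hs
  have hK : 0 < 2 * 4 ^ s * ∑' k, (sobolevWeight s k)⁻¹ := by
    have := hw.summable_inv.tsum_pos (fun k => (inv_pos.2 (hw.pos k)).le) 0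
      (inv_pos.2 (hw.pos 0))
    positivity
  refine ⟨√(2 * 4 ^ s * ∑' k, (sobolevWeight s k)⁻¹), sqrt_pos.2 hK, fun a b ha hb =>
    ⟨hw.summable_norm_mul_comp_sub ha hb, hw.summable_mul_sq_norm_tsum_mul_comp_sub ha hb, ?_⟩⟩
  rw [sq_sqrt hK.le]
  exact hw.tsum_mul_sq_norm_tsum_mul_comp_sub_le ha hb
end

section
/- Let L > 0, let u : ℝ → ℂ be three times continuously differentiable and L-periodic, let a₁ : ℝ → ℝ be continuously differentiable and L-periodic, let a₀ : ℝ → ℝ be continuous and L-periodic, and set C₀ := sup_{x ∈ [0,L]} |a₀(x) − a₁′(x)/2|. Let λ ∈ ℂ with Re λ > C₀ and define h : ℝ → ℂ by h(x) := λ·u(x) + u‴(x) − u″(x) − a₁(x)·u′(x) − a₀(x)·u(x). Then (Re λ − C₀) · (∫₀^L ‖u(x)‖² dx)^{1/2} ≤ (∫₀^L ‖h(x)‖² dx)^{1/2}. (This is the resolvent estimate ‖(λ − 𝓛)^{-1}‖ ≤ 1/(Re λ − C₀) for the linearized operator 𝓛 u = −u‴ + u″ + a₁ u′ + a₀ u on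 L²_per([0,L]), showing that 𝓛 generates a quasicontractive semigroup.) -/
/-!
Write `⟪·, ·⟫` for the real inner product, which on `ℂ` is `⟪z, w⟫ = Re (w * conj z)`.
Pairing `𝓛 u` with `u`, the terms `-⟪u‴, u⟫ + ⟪u″, u⟫ + a₁ ⟪u′, u⟫` equal
`-F′ - ‖u′‖² - (a₁′ / 2) ‖u‖²` for the periodic flux
`F = ⟪u″, u⟫ - ‖u′‖² / 2 - ⟪u′, u⟫ - a₁ ‖u‖² / 2`. Hence `∫₀ᴸ ⟪𝓛 u, u⟫ ≤ C₀ ∫₀ᴸ ‖u‖²`, so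
`∫₀ᴸ ⟪h, u⟫ ≥ c ∫₀ᴸ ‖u‖²` with `c = Re λ - C₀`, and `0 ≤ ∫₀ᴸ ‖h - c u‖²` then gives
`c² ∫₀ᴸ ‖u‖² ≤ ∫₀ᴸ ‖h‖²`.
-/

open intervalIntegral Function Set
open scoped RealInnerProductSpace

noncomputable section

theorem Function.Periodic.iteratedDeriv {F : Type*} [NormedAddCommGroup F] [NormedSpace ℝ F]
    {f : ℝ → F} {L : ℝ} (hf : Periodic f L) (n : ℕ) : Periodic (iteratedDeriv n f) L := by
  intro x
  rw [← congrFun (iteratedDeriv_comp_add_const n f L) x, hf.funext]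

theorem ContDiff.hasDerivAt_iteratedDeriv {F : Type*} [NormedAddCommGroup F] [NormedSpace ℝ F]
    {f : ℝ → F} {n : WithTop ℕ∞} (hf : ContDiff ℝ n f) {k : ℕ} (hk : k < n) (x : ℝ) :
    HasDerivAt (iteratedDeriv k f) (iteratedDeriv (k + 1) f x) x := by
  rw [iteratedDeriv_succ]
  exact (hf.differentiable_iteratedDeriv k hk x).hasDerivAt

variable {E : Type*} [NormedAddCommGroup E] [InnerProductSpace ℝ E]

def linearizedOp (a₁ a₀ : ℝ → ℝ) (u : ℝ → E) (x : ℝ) : E :=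
  -iteratedDeriv 3 u x + iteratedDeriv 2 u x + a₁ x • deriv u x + a₀ x • u x

def kdvBurgersFlux (a : ℝ → ℝ) (u : ℝ → E) (x : ℝ) : ℝ :=
  ⟪iteratedDeriv 2 u x, u x⟫ - ‖deriv u x‖ ^ 2 / 2 - ⟪deriv u x, u x⟫ - a x * ‖u x‖ ^ 2 / 2

theorem hasDerivAt_kdvBurgersFlux {a : ℝ → ℝ} {u : ℝ → E} (ha : Differentiable ℝ a)
    (hu : ContDiff ℝ 3 u) (x : ℝ) :
    HasDerivAt (kdvBurgersFlux a u)
      (⟪iteratedDeriv 3 u x - iteratedDeriv 2 u x - a x • deriv u x, u x⟫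
        - ‖deriv u x‖ ^ 2 - deriv a x / 2 * ‖u x‖ ^ 2) x := by
  have h₀ : HasDerivAt u (deriv u x) x := (hu.differentiable (by norm_num) x).hasDerivAt
  have h₁ : HasDerivAt (deriv u) (iteratedDeriv 2 u x) x := by
    simpa [iteratedDeriv_one] using hu.hasDerivAt_iteratedDeriv (k := 1) (by norm_num) x
  have h₂ : HasDerivAt (iteratedDeriv 2 u) (iteratedDeriv 3 u x) x :=
    hu.hasDerivAt_iteratedDeriv (k := 2) (by norm_num) x
  refine ((((h₂.inner ℝ h₀).sub (h₁.norm_sq.div_const 2)).sub (h₁.inner ℝ h₀)).sub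
    (((ha x).hasDerivAt.mul h₀.norm_sq).div_const 2)).congr_deriv ?_
  rw [real_inner_comm (deriv u x) (u x), real_inner_comm (iteratedDeriv 2 u x) (deriv u x)]
  simp only [inner_sub_left, real_inner_smul_left, real_inner_self_eq_norm_sq]
  ring

theorem continuous_linearizedOp {a₁ a₀ : ℝ → ℝ} {u : ℝ → E} (ha₁ : Continuous a₁)
    (ha₀ : Continuous a₀) (hu : ContDiff ℝ 3 u) : Continuous (linearizedOp a₁ a₀ u) := by
  have cu₁ : Continuous (deriv u) := hu.continuous_deriv (by norm_num)
  have cu₂ : Continuous (iteratedDeriv 2 u) := hu.continuous_iteratedDeriv 2 (by norm_num)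
  have cu₃ : Continuous (iteratedDeriv 3 u) := hu.continuous_iteratedDeriv 3 le_rfl
  have cu : Continuous u := hu.continuous
  unfold linearizedOp
  fun_prop

theorem Function.Periodic.kdvBurgersFlux {a : ℝ → ℝ} {u : ℝ → E} {L : ℝ} (ha : Periodic a L)
    (hu : Periodic u L) : Periodic (kdvBurgersFlux a u) L := by
  have hu₁ := hu.iteratedDeriv 1
  rw [iteratedDeriv_one] at hu₁
  intro x
  simp only [_root_.kdvBurgersFlux, ha x, hu x, hu₁ x, hu.iteratedDeriv 2 x]

theorem integral_inner_linearizedOp_le {L C : ℝ} (hL : 0 ≤ L) {a₁ a₀ : ℝ → ℝ} {u : ℝ → E}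
    (ha₁ : ContDiff ℝ 1 a₁) (ha₁L : Periodic a₁ L) (ha₀ : Continuous a₀)
    (hu : ContDiff ℝ 3 u) (huL : Periodic u L)
    (hC : ∀ x ∈ Icc 0 L, a₀ x - deriv a₁ x / 2 ≤ C) :
    ∫ x in 0..L, ⟪linearizedOp a₁ a₀ u x, u x⟫ ≤ C * ∫ x in 0..L, ‖u x‖ ^ 2 := by
  set F' : ℝ → ℝ := fun x => ⟪iteratedDeriv 3 u x - iteratedDeriv 2 u x - a₁ x • deriv u x, u x⟫
    - ‖deriv u x‖ ^ 2 - deriv a₁ x / 2 * ‖u x‖ ^ 2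
  have hF (x : ℝ) : HasDerivAt (kdvBurgersFlux a₁ u) (F' x) x :=
    hasDerivAt_kdvBurgersFlux (ha₁.differentiable one_ne_zero) hu x
  have hpoint (x : ℝ) : ⟪linearizedOp a₁ a₀ u x, u x⟫
      = -F' x - ‖deriv u x‖ ^ 2 + (a₀ x - deriv a₁ x / 2) * ‖u x‖ ^ 2 := by
    simp only [F', linearizedOp, inner_add_left, inner_sub_left, inner_neg_left,
      real_inner_smul_left, real_inner_self_eq_norm_sq]
    ring
  have cu : Continuous u := hu.continuous
  have cu₁ : Continuous (deriv u) := hu.continuous_deriv (by norm_num)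
  have cu₂ : Continuous (iteratedDeriv 2 u) := hu.continuous_iteratedDeriv 2 (by norm_num)
  have cu₃ : Continuous (iteratedDeriv 3 u) := hu.continuous_iteratedDeriv 3 le_rfl
  have ca₁ : Continuous a₁ := ha₁.continuous
  have ca₁' : Continuous (deriv a₁) := ha₁.continuous_deriv le_rfl
  have cF' : Continuous F' := by fun_prop
  have hF'_int : ∫ x in 0..L, F' x = 0 := by
    rw [integral_eq_sub_of_hasDerivAt (fun x _ => hF x) (cF'.intervalIntegrable 0 L),
      (ha₁L.kdvBurgersFlux huL).eq, sub_self]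
  calc ∫ x in 0..L, ⟪linearizedOp a₁ a₀ u x, u x⟫
      ≤ ∫ x in 0..L, (C * ‖u x‖ ^ 2 - F' x) := by
        refine integral_mono_on hL ?_ ?_ fun x hx => ?_
        · exact ((continuous_linearizedOp ca₁ ha₀ hu).inner cu).intervalIntegrable 0 L
        · exact Continuous.intervalIntegrable (by fun_prop) 0 L
        · rw [hpoint]
          nlinarith [hC x hx, sq_nonneg ‖deriv u x‖, sq_nonneg ‖u x‖]
    _ = C * ∫ x in 0..L, ‖u x‖ ^ 2 := by
        rw [integral_sub ((by fun_prop : Continuous fun x => C * ‖u x‖ ^ 2).intervalIntegrable 0 L)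
          (cF'.intervalIntegrable 0 L), hF'_int, sub_zero, integral_const_mul]

theorem mul_sqrt_integral_norm_sq_le_of_le_integral_inner {a b c : ℝ} (hab : a ≤ b) (hc : 0 ≤ c)
    {f g : ℝ → E} (hf : Continuous f) (hg : Continuous g)
    (hfg : c * ∫ x in a..b, ‖g x‖ ^ 2 ≤ ∫ x in a..b, ⟪f x, g x⟫) :
    c * √(∫ x in a..b, ‖g x‖ ^ 2) ≤ √(∫ x in a..b, ‖f x‖ ^ 2) := by
  have hexpand : ∫ x in a..b, ‖f x - c • g x‖ ^ 2 = (∫ x in a..b, ‖f x‖ ^ 2)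
      - 2 * c * (∫ x in a..b, ⟪f x, g x⟫) + c ^ 2 * ∫ x in a..b, ‖g x‖ ^ 2 := by
    have hpt (x : ℝ) : ‖f x - c • g x‖ ^ 2
        = ‖f x‖ ^ 2 - 2 * c * ⟪f x, g x⟫ + c ^ 2 * ‖g x‖ ^ 2 := by
      rw [norm_sub_sq_real, real_inner_smul_right, norm_smul, Real.norm_of_nonneg hc]
      ring
    simp_rw [hpt]
    rw [integral_add, integral_sub, integral_const_mul, integral_const_mul]
    all_goals exact Continuous.intervalIntegrable (by fun_prop) a b
  have hsq : c ^ 2 * ∫ x in a..b, ‖g x‖ ^ 2 ≤ ∫ x in a..b, ‖f x‖ ^ 2 := by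
    have : 0 ≤ ∫ x in a..b, ‖f x - c • g x‖ ^ 2 := integral_nonneg hab fun x _ => sq_nonneg _
    nlinarith [mul_le_mul_of_nonneg_left hfg hc]
  calc c * √(∫ x in a..b, ‖g x‖ ^ 2) = √(c ^ 2 * ∫ x in a..b, ‖g x‖ ^ 2) := by
        rw [Real.sqrt_mul (sq_nonneg c), Real.sqrt_sq hc]
    _ ≤ √(∫ x in a..b, ‖f x‖ ^ 2) := Real.sqrt_le_sqrt hsq

end

theorem Complex.real_inner_mul_left_self (c z : ℂ) : ⟪c * z, z⟫ = c.re * ‖z‖ ^ 2 := by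
  rw [Complex.inner, map_mul, mul_left_comm, Complex.mul_conj, Complex.re_mul_ofReal,
    Complex.conj_re, Complex.normSq_eq_norm_sq]

theorem linearized_operator_resolvent_estimate_general (L : ℝ) (hL : 0 < L)
    (u : ℝ → ℂ) (hu : ContDiff ℝ 3 u) (huL : ∀ x, u (x + L) = u x)
    (a₁ : ℝ → ℝ) (ha₁ : ContDiff ℝ 1 a₁) (ha₁L : ∀ x, a₁ (x + L) = a₁ x)
    (a₀ : ℝ → ℝ) (ha₀ : Continuous a₀)
    (C₀ : ℝ) (hC₀ : C₀ = sSup ((fun x => |a₀ x - deriv a₁ x / 2|) '' Set.Icc 0 L))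
    (lam : ℂ) (hlam : C₀ < lam.re)
    (h : ℝ → ℂ)
    (hh : ∀ x, h x = lam * u x + iteratedDeriv 3 u x - iteratedDeriv 2 u x -
        (a₁ x : ℂ) * deriv u x - (a₀ x : ℂ) * u x) :
    (lam.re - C₀) * Real.sqrt (∫ x in (0:ℝ)..L, ‖u x‖ ^ 2) ≤
      Real.sqrt (∫ x in (0:ℝ)..L, ‖h x‖ ^ 2) := by
  have ca₁' : Continuous (deriv a₁) := ha₁.continuous_deriv le_rfl
  have hC (x : ℝ) (hx : x ∈ Icc 0 L) : a₀ x - deriv a₁ x / 2 ≤ C₀ :=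
    hC₀ ▸ (le_abs_self _).trans
      (le_csSup (isCompact_Icc.image (by fun_prop)).bddAbove ⟨x, hx, rfl⟩)
  have hh' : h = fun x => lam * u x - linearizedOp a₁ a₀ u x := by
    funext x
    rw [hh, linearizedOp, Complex.real_smul, Complex.real_smul]
    ring
  have cLu := continuous_linearizedOp ha₁.continuous ha₀ hu
  refine mul_sqrt_integral_norm_sq_le_of_le_integral_inner hL.le (sub_nonneg.2 hlam.le)
    (hh' ▸ (continuous_const.mul hu.continuous).sub cLu) hu.continuous ?_
  have hdiss := integral_inner_linearizedOp_le hL.le ha₁ ha₁L ha₀ hu huL hC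
  simp_rw [hh', inner_sub_left, Complex.real_inner_mul_left_self]
  rw [integral_sub, integral_const_mul]
  · linarith
  all_goals exact Continuous.intervalIntegrable (by fun_prop) 0 L

/-- Resolvent estimate for the linearized KdV–Burgers operator
`𝓛u = −u‴ + u″ + a₁·u′ + a₀·u` on `L²_per([0,L])`: if `Re λ > C₀` with
`C₀ = sup_{[0,L]} |a₀ − a₁′/2|` and `h = (λ − 𝓛)u`, then
`(Re λ − C₀)·‖u‖_{L²(0,L)} ≤ ‖h‖_{L²(0,L)}`. -/
theorem linearized_operator_resolvent_estimate (L : ℝ) (hL : 0 < L)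
    (u : ℝ → ℂ) (hu : ContDiff ℝ 3 u) (huL : ∀ x, u (x + L) = u x)
    (a₁ : ℝ → ℝ) (ha₁ : ContDiff ℝ 1 a₁) (ha₁L : ∀ x, a₁ (x + L) = a₁ x)
    (a₀ : ℝ → ℝ) (ha₀ : Continuous a₀) (ha₀L : ∀ x, a₀ (x + L) = a₀ x)
    (C₀ : ℝ) (hC₀ : C₀ = sSup ((fun x => |a₀ x - deriv a₁ x / 2|) '' Set.Icc 0 L))
    (lam : ℂ) (hlam : C₀ < lam.re)
    (h : ℝ → ℂ)
    (hh : ∀ x, h x = lam * u x + iteratedDeriv 3 u x - iteratedDeriv 2 u x -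
        (a₁ x : ℂ) * deriv u x - (a₀ x : ℂ) * u x) :
    (lam.re - C₀) * Real.sqrt (∫ x in (0:ℝ)..L, ‖u x‖ ^ 2) ≤
      Real.sqrt (∫ x in (0:ℝ)..L, ‖h x‖ ^ 2) :=
  linearized_operator_resolvent_estimate_general L hL u hu huL a₁ ha₁ ha₁L a₀ ha₀ C₀ hC₀ lam hlam h
    hh
end

section
/- Let f : ℝ → ℝ be twice continuously differentiable, g : ℝ → ℝ continuously differentiable, L > 0 and T > 0. If u and v are two classical L-periodic solutions of u_t + f(u)_x − u_xx + u_xxx = g(u) on [0,T] with the same initial datum, u(0,x) = v(0,x) for all x ∈ ℝ, and both u and v are bounded together with their spatial derivatives up to order three on [0,T]×ℝ, then u(t,x) = v(t,x) for all t ∈ [0,T] and x ∈ ℝ. -/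
/-- A classical `L`-periodic solution of `u_t + f(u)_x − u_xx + u_xxx = g(u)` on `[0,T]`:
`u` is continuous on `[0,T] × ℝ`, `L`-periodic in space, its partial derivatives
`∂ₜu, ∂ₓu, ∂ₓ²u, ∂ₓ³u` exist and are continuous on `(0,T] × ℝ`, and the equation holds
pointwise on `(0,T] × ℝ`. -/
def IsClassicalPeriodicSolutionOn (f g : ℝ → ℝ) (L T : ℝ) (u : ℝ → ℝ → ℝ) : Prop :=
  ContinuousOn (fun p : ℝ × ℝ => u p.1 p.2) (Set.Icc (0:ℝ) T ×ˢ (Set.univ : Set ℝ)) ∧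
  (∀ t ∈ Set.Icc (0:ℝ) T, ∀ x : ℝ, u t (x + L) = u t x) ∧
  (∀ t ∈ Set.Ioc (0:ℝ) T, ∀ x : ℝ,
    DifferentiableAt ℝ (fun s => u s x) t ∧
    DifferentiableAt ℝ (u t) x ∧
    DifferentiableAt ℝ (deriv (u t)) x ∧
    DifferentiableAt ℝ (deriv (deriv (u t))) x) ∧
  ContinuousOn (fun p : ℝ × ℝ => deriv (fun s => u s p.2) p.1)
    (Set.Ioc (0:ℝ) T ×ˢ (Set.univ : Set ℝ)) ∧
  ContinuousOn (fun p : ℝ × ℝ => deriv (u p.1) p.2)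
    (Set.Ioc (0:ℝ) T ×ˢ (Set.univ : Set ℝ)) ∧
  ContinuousOn (fun p : ℝ × ℝ => deriv (deriv (u p.1)) p.2)
    (Set.Ioc (0:ℝ) T ×ˢ (Set.univ : Set ℝ)) ∧
  ContinuousOn (fun p : ℝ × ℝ => deriv (deriv (deriv (u p.1))) p.2)
    (Set.Ioc (0:ℝ) T ×ˢ (Set.univ : Set ℝ)) ∧
  (∀ t ∈ Set.Ioc (0:ℝ) T, ∀ x : ℝ,
    deriv (fun s => u s x) t + deriv f (u t x) * deriv (u t) x -
      deriv (deriv (u t)) x + deriv (deriv (deriv (u t))) x = g (u t x))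

/-!
The difference `w = u - v` solves `w_t = A + w_xx - w_xxx` with
`A = g(u) - g(v) - f'(u) w_x - (f'(u) - f'(v)) v_x`. Since the solutions are bounded, `g` and `f'`
are Lipschitz on their range, so `2 w A ≤ C w² + w_x²`. Multiplying the equation by `2 w` and
integrating over a period, the dispersive term vanishes and the dissipative one contributes
`-2 ∫ w_x²`, so the energy `E(t) = ∫₀ᴸ w²` satisfies `E' ≤ C E` with `E(0) = 0`. Hence `E ≡ 0`
(Gronwall), and `w ≡ 0` by continuity and periodicity.
-/

open Set Topology Function MeasureTheory

theorem ContinuousOn.continuous_slice {α β γ : Type*} [TopologicalSpace α] [TopologicalSpace β]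
    [TopologicalSpace γ] {F : α × β → γ} {s : Set α} (hF : ContinuousOn F (s ×ˢ univ)) {t : α}
    (ht : t ∈ s) : Continuous fun x => F (t, x) :=
  hF.comp_continuous (Continuous.prodMk_right t) fun _ => ⟨ht, trivial⟩

theorem nonpos_of_hasDerivAt_le_mul_self {E E' : ℝ → ℝ} {a b C : ℝ}
    (hc : ContinuousOn E (Icc a b)) (hd : ∀ t ∈ Ioo a b, HasDerivAt E (E' t) t)
    (hle : ∀ t ∈ Ioo a b, E' t ≤ C * E t) (ha : E a ≤ 0) : ∀ t ∈ Icc a b, E t ≤ 0 := by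
  intro t ht
  set G : ℝ → ℝ := fun s => E s * Real.exp (-C * s)
  have hGd : ∀ s ∈ Ioo a b, HasDerivAt G ((E' s - C * E s) * Real.exp (-C * s)) s := by
    intro s hs
    have hexp : HasDerivAt (fun r => Real.exp (-C * r)) (Real.exp (-C * s) * -C) s := by
      simpa using ((hasDerivAt_id s).const_mul (-C)).exp
    exact ((hd s hs).mul hexp).congr_deriv (by ring)
  have hG : AntitoneOn G (Icc a b) := by
    apply antitoneOn_of_deriv_nonpos (f := G) (convex_Icc a b) (hc.mul (by fun_prop))
    · rw [interior_Icc]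
      exact fun s hs => (hGd s hs).differentiableAt.differentiableWithinAt
    · rw [interior_Icc]
      intro s hs
      rw [(hGd s hs).deriv]
      exact mul_nonpos_of_nonpos_of_nonneg (sub_nonpos.2 (hle s hs)) (Real.exp_pos _).le
  have hGt : G t ≤ 0 :=
    (hG ⟨le_rfl, ht.1.trans ht.2⟩ ht ht.1).trans
      (mul_nonpos_of_nonpos_of_nonneg ha (Real.exp_pos _).le)
  exact nonpos_of_mul_nonpos_left hGt (Real.exp_pos _)

theorem continuousOn_intervalIntegral_sq {w : ℝ → ℝ → ℝ} {s : Set ℝ} {a b A : ℝ}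
    (hw : ContinuousOn (fun p : ℝ × ℝ => w p.1 p.2) (s ×ˢ univ))
    (hwA : ∀ t ∈ s, ∀ x, |w t x| ≤ A) :
    ContinuousOn (fun t => ∫ x in a..b, w t x ^ 2) s := by
  intro t₀ ht₀
  refine intervalIntegral.continuousWithinAt_of_dominated_interval (bound := fun _ => A ^ 2)
    ?_ ?_ intervalIntegrable_const (ae_of_all _ fun x _ => ?_)
  · filter_upwards [self_mem_nhdsWithin] with t ht
    exact ((hw.continuous_slice ht).pow 2).aestronglyMeasurable
  · filter_upwards [self_mem_nhdsWithin] with t ht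
    refine ae_of_all _ fun x _ => ?_
    rw [Real.norm_eq_abs, abs_pow]
    exact pow_le_pow_left₀ (abs_nonneg _) (hwA t ht x) 2
  · exact ((hw.comp (Continuous.prodMk_left x).continuousOn fun _ ht => ⟨ht, trivial⟩).pow 2)
      t₀ ht₀

theorem hasDerivAt_intervalIntegral_sq {w w' : ℝ → ℝ → ℝ} {s : Set ℝ} {t₀ a b A B : ℝ}
    (hs : s ∈ 𝓝 t₀) (hw : ∀ t ∈ s, Continuous (w t)) (hw' : Continuous (w' t₀))
    (hwA : ∀ t ∈ s, ∀ x, |w t x| ≤ A) (hw'B : ∀ t ∈ s, ∀ x, |w' t x| ≤ B)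
    (hderiv : ∀ t ∈ s, ∀ x, HasDerivAt (w · x) (w' t x) t) :
    HasDerivAt (fun t => ∫ x in a..b, w t x ^ 2) (∫ x in a..b, 2 * w t₀ x * w' t₀ x) t₀ := by
  have hw₀ := hw t₀ (mem_of_mem_nhds hs)
  refine (intervalIntegral.hasDerivAt_integral_of_dominated_loc_of_deriv_le
    (F := fun t x => w t x ^ 2) (F' := fun t x => 2 * w t x * w' t x)
    (bound := fun _ => 2 * (A * B)) hs ?_ ((hw₀.pow 2).intervalIntegrable a b)
    ((continuous_const.mul hw₀).mul hw').aestronglyMeasurable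
    (ae_of_all _ fun x _ t ht => ?_) intervalIntegrable_const
    (ae_of_all _ fun x _ t ht => ?_)).2
  · filter_upwards [hs] with t ht using ((hw t ht).pow 2).aestronglyMeasurable
  · rw [Real.norm_eq_abs, abs_mul, abs_mul, abs_two, mul_assoc]
    gcongr
    exacts [(abs_nonneg _).trans (hwA t ht x), hwA t ht x, hw'B t ht x]
  · exact ((hderiv t ht x).pow 2).congr_deriv (by push_cast; ring)

namespace Function.Periodic

variable {L : ℝ} {w w₁ w₂ w₃ : ℝ → ℝ}

theorem periodic_of_hasDerivAt (hw : Periodic w L) (h₁ : ∀ x, HasDerivAt w (w₁ x) x) :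
    Periodic w₁ L := by
  intro x
  rw [← (h₁ x).deriv, ← (h₁ (x + L)).deriv, ← deriv_comp_add_const]
  exact congrArg (deriv · x) (funext hw)

theorem integral_mul_deriv_eq_neg_integral_deriv_mul {u v u' v' : ℝ → ℝ} (hu : Periodic u L)
    (hv : Periodic v L) (hu' : ∀ x, HasDerivAt u (u' x) x) (hv' : ∀ x, HasDerivAt v (v' x) x)
    (hcu' : Continuous u') (hcv' : Continuous v') :
    ∫ x in 0..L, u x * v' x = -∫ x in 0..L, u' x * v x := by
  rw [intervalIntegral.integral_mul_deriv_eq_deriv_mul (fun x _ => hu' x) (fun x _ => hv' x)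
    (hcu'.intervalIntegrable 0 L) (hcv'.intervalIntegrable 0 L), hu.eq, hv.eq]
  ring

/-- Energy estimate for `w_t = A + w_xx - w_xxx`: over a period the dispersive term integrates
to zero and the dissipative one to `-2 ∫ w_x²`, which absorbs the `w_x²` in the bound on `A`. -/
theorem integral_two_mul_add_sub_le {A : ℝ → ℝ} {C : ℝ} (hL : 0 ≤ L) (hw : Periodic w L)
    (h₁ : ∀ x, HasDerivAt w (w₁ x) x) (h₂ : ∀ x, HasDerivAt w₁ (w₂ x) x)
    (h₃ : ∀ x, HasDerivAt w₂ (w₃ x) x) (hc₃ : Continuous w₃) (hA : Continuous A)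
    (hAle : ∀ x, 2 * w x * A x ≤ C * w x ^ 2 + w₁ x ^ 2) :
    ∫ x in 0..L, 2 * w x * (A x + w₂ x - w₃ x) ≤ C * ∫ x in 0..L, w x ^ 2 := by
  have hc : Continuous w := continuous_iff_continuousAt.2 fun x => (h₁ x).continuousAt
  have hc₁ : Continuous w₁ := continuous_iff_continuousAt.2 fun x => (h₂ x).continuousAt
  have hc₂ : Continuous w₂ := continuous_iff_continuousAt.2 fun x => (h₃ x).continuousAt
  have hp₁ := hw.periodic_of_hasDerivAt h₁
  have hp₂ := hp₁.periodic_of_hasDerivAt h₂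
  have hww₂ : ∫ x in 0..L, w x * w₂ x = -∫ x in 0..L, w₁ x ^ 2 := by
    simpa only [sq] using hw.integral_mul_deriv_eq_neg_integral_deriv_mul hp₁ h₁ h₂ hc₁ hc₂
  have hw₁w₂ : ∫ x in 0..L, w₁ x * w₂ x = 0 := by
    have h := hp₁.integral_mul_deriv_eq_neg_integral_deriv_mul hp₁ h₂ h₂ hc₂ hc₂
    simp only [mul_comm (w₂ _)] at h
    linarith
  have hww₃ : ∫ x in 0..L, w x * w₃ x = 0 := by
    rw [hw.integral_mul_deriv_eq_neg_integral_deriv_mul hp₂ h₁ h₃ hc₁ hc₃, hw₁w₂, neg_zero]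
  calc ∫ x in 0..L, 2 * w x * (A x + w₂ x - w₃ x)
      = ∫ x in 0..L, (2 * w x * A x + 2 * (w x * w₂ x) - 2 * (w x * w₃ x)) :=
        intervalIntegral.integral_congr fun x _ => by ring
    _ = (∫ x in 0..L, 2 * w x * A x) - 2 * ∫ x in 0..L, w₁ x ^ 2 := by
        rw [intervalIntegral.integral_sub, intervalIntegral.integral_add,
          intervalIntegral.integral_const_mul, intervalIntegral.integral_const_mul, hww₂, hww₃]
        · ring
        all_goals exact Continuous.intervalIntegrable (by fun_prop) _ _
    _ ≤ (∫ x in 0..L, (C * w x ^ 2 + w₁ x ^ 2)) - 2 * ∫ x in 0..L, w₁ x ^ 2 := by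
        gcongr
        exact intervalIntegral.integral_mono_on hL
          (Continuous.intervalIntegrable (by fun_prop) _ _)
          (Continuous.intervalIntegrable (by fun_prop) _ _) fun x _ => hAle x
    _ = C * (∫ x in 0..L, w x ^ 2) - ∫ x in 0..L, w₁ x ^ 2 := by
        rw [intervalIntegral.integral_add, intervalIntegral.integral_const_mul]
        · ring
        all_goals exact Continuous.intervalIntegrable (by fun_prop) _ _
    _ ≤ C * ∫ x in 0..L, w x ^ 2 :=
        sub_le_self _ (intervalIntegral.integral_nonneg hL fun x _ => sq_nonneg _)

theorem eq_zero_of_integral_sq_nonpos (hL : 0 < L) (hw : Periodic w L) (hc : Continuous w)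
    (h : ∫ x in 0..L, w x ^ 2 ≤ 0) (x : ℝ) : w x = 0 := by
  obtain ⟨y, hy, hxy⟩ := hw.exists_mem_Ico₀ hL x
  rw [hxy]
  by_contra hne
  have hpos : 0 < ∫ x in 0..L, w x ^ 2 :=
    intervalIntegral.integral_pos hL (hc.pow 2).continuousOn (fun z _ => sq_nonneg _)
      ⟨y, Ico_subset_Icc_self hy, by positivity⟩
  linarith

end Function.Periodic

theorem two_mul_sub_sub_le {a G P Q w₁ v₁ Kg Cf Kf M : ℝ} (hG : |G| ≤ Kg * |a|) (hP : |P| ≤ Cf)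
    (hQ : |Q| ≤ Kf * |a|) (hv₁ : |v₁| ≤ M) :
    2 * a * (G - P * w₁ - Q * v₁) ≤ (2 * Kg + Cf ^ 2 + 2 * Kf * M) * a ^ 2 + w₁ ^ 2 := by
  have hG' : a * G ≤ Kg * a ^ 2 := calc
    a * G ≤ |a| * |G| := (le_abs_self _).trans (abs_mul a G).le
    _ ≤ |a| * (Kg * |a|) := by gcongr
    _ = Kg * a ^ 2 := by rw [← sq_abs a]; ring
  have hP' : -(a * P * w₁) ≤ Cf * |a| * |w₁| := calc
    -(a * P * w₁) ≤ |a| * |P| * |w₁| := by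
      rw [← abs_mul, ← abs_mul]; exact neg_le_abs _
    _ ≤ |a| * Cf * |w₁| := by gcongr
    _ = Cf * |a| * |w₁| := by ring
  have hQ' : -(a * Q * v₁) ≤ Kf * M * a ^ 2 := calc
    -(a * Q * v₁) ≤ |a| * |Q| * |v₁| := by
      rw [← abs_mul, ← abs_mul]; exact neg_le_abs _
    _ ≤ |a| * (Kf * |a|) * M := by
      have := (abs_nonneg Q).trans hQ
      gcongr
    _ = Kf * M * a ^ 2 := by rw [← sq_abs a]; ring
  -- AM-GM: `2 Cf |a| |w₁| ≤ Cf² a² + w₁²`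
  nlinarith [sq_nonneg (Cf * |a| - |w₁|), sq_abs a, sq_abs w₁]

theorem exists_two_mul_nonlinearity_sub_le {f g : ℝ → ℝ} (hf : ContDiff ℝ 2 f)
    (hg : ContDiff ℝ 1 g) (M : ℝ) :
    ∃ C, ∀ a ∈ Icc (-M) M, ∀ b ∈ Icc (-M) M, ∀ a₁ b₁ : ℝ, |b₁| ≤ M →
      2 * (a - b) * (g a - g b - deriv f a * (a₁ - b₁) - (deriv f a - deriv f b) * b₁) ≤
        C * (a - b) ^ 2 + (a₁ - b₁) ^ 2 := by
  have hf' : ContDiff ℝ 1 (deriv f) := hf.deriv'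
  obtain ⟨Kg, hKg⟩ :=
    hg.contDiffOn.exists_lipschitzOnWith one_ne_zero (convex_Icc (-M) M) isCompact_Icc
  obtain ⟨Kf, hKf⟩ :=
    hf'.contDiffOn.exists_lipschitzOnWith one_ne_zero (convex_Icc (-M) M) isCompact_Icc
  obtain ⟨Cf, hCf⟩ :=
    (isCompact_Icc (a := -M) (b := M)).exists_bound_of_continuousOn hf'.continuous.continuousOn
  refine ⟨2 * Kg + Cf ^ 2 + 2 * Kf * M, fun a ha b hb a₁ b₁ hb₁ => ?_⟩
  have hG := hKg.dist_le_mul a ha b hb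
  have hQ := hKf.dist_le_mul a ha b hb
  rw [Real.dist_eq, Real.dist_eq] at hG hQ
  exact two_mul_sub_sub_le hG (hCf a ha) hQ hb₁

def BoundedWithSpatialDerivs (T M : ℝ) (u : ℝ → ℝ → ℝ) : Prop :=
  ∀ t ∈ Icc (0:ℝ) T, ∀ x : ℝ,
    |u t x| ≤ M ∧ |deriv (u t) x| ≤ M ∧ |deriv (deriv (u t)) x| ≤ M ∧
      |deriv (deriv (deriv (u t))) x| ≤ M

theorem BoundedWithSpatialDerivs.mono {T M N : ℝ} {u : ℝ → ℝ → ℝ}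
    (hM : BoundedWithSpatialDerivs T M u) (hMN : M ≤ N) : BoundedWithSpatialDerivs T N u :=
  fun t ht x =>
    have ⟨h₀, h₁, h₂, h₃⟩ := hM t ht x
    ⟨h₀.trans hMN, h₁.trans hMN, h₂.trans hMN, h₃.trans hMN⟩

namespace IsClassicalPeriodicSolutionOn

variable {f g : ℝ → ℝ} {L T M : ℝ} {u v : ℝ → ℝ → ℝ}

theorem periodic (hu : IsClassicalPeriodicSolutionOn f g L T u) {t : ℝ} (ht : t ∈ Icc 0 T) :
    Periodic (u t) L :=
  hu.2.1 t ht

theorem continuous (hu : IsClassicalPeriodicSolutionOn f g L T u) {t : ℝ} (ht : t ∈ Icc 0 T) :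
    Continuous (u t) :=
  hu.1.continuous_slice ht

theorem continuous_deriv_time (hu : IsClassicalPeriodicSolutionOn f g L T u) {t : ℝ}
    (ht : t ∈ Ioc 0 T) : Continuous fun x => deriv (fun s => u s x) t :=
  hu.2.2.2.1.continuous_slice ht

theorem exists_abs_deriv_time_le (hf : Continuous (deriv f)) (hg : Continuous g)
    (hu : IsClassicalPeriodicSolutionOn f g L T u) (hM : BoundedWithSpatialDerivs T M u) :
    ∃ C, ∀ t ∈ Ioc 0 T, ∀ x, |deriv (fun s => u s x) t| ≤ C := by
  obtain ⟨-, -, -, -, -, -, -, heq⟩ := hu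
  obtain ⟨Cf, hCf⟩ := (isCompact_Icc (a := -M) (b := M)).exists_bound_of_continuousOn
    hf.continuousOn
  obtain ⟨Cg, hCg⟩ := (isCompact_Icc (a := -M) (b := M)).exists_bound_of_continuousOn
    hg.continuousOn
  refine ⟨Cg + Cf * M + 2 * M, fun t ht x => ?_⟩
  obtain ⟨h₀, h₁, h₂, h₃⟩ := hM t (Ioc_subset_Icc_self ht) x
  have hK : u t x ∈ Icc (-M) M := abs_le.1 h₀
  have hfux : |deriv f (u t x) * deriv (u t) x| ≤ Cf * M := by
    rw [abs_mul]
    exact mul_le_mul (hCf _ hK) h₁ (abs_nonneg _) ((norm_nonneg _).trans (hCf _ hK))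
  have hgu := hCg _ hK
  rw [Real.norm_eq_abs] at hgu
  rw [abs_le] at hgu hfux h₂ h₃ ⊢
  constructor <;> linarith [heq t ht x]

theorem continuousOn_integral_sq_sub {a b : ℝ} (hu : IsClassicalPeriodicSolutionOn f g L T u)
    (hv : IsClassicalPeriodicSolutionOn f g L T v) (hMu : BoundedWithSpatialDerivs T M u)
    (hMv : BoundedWithSpatialDerivs T M v) :
    ContinuousOn (fun t => ∫ x in a..b, (u t x - v t x) ^ 2) (Icc 0 T) :=
  continuousOn_intervalIntegral_sq (w := fun t x => u t x - v t x) (hu.1.sub hv.1)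
    fun t ht x => (abs_sub _ _).trans (add_le_add (hMu t ht x).1 (hMv t ht x).1)

theorem hasDerivAt_integral_sq_sub {a b t : ℝ} (hf : Continuous (deriv f)) (hg : Continuous g)
    (hu : IsClassicalPeriodicSolutionOn f g L T u) (hv : IsClassicalPeriodicSolutionOn f g L T v)
    (hMu : BoundedWithSpatialDerivs T M u) (hMv : BoundedWithSpatialDerivs T M v)
    (ht : t ∈ Ioo 0 T) :
    HasDerivAt (fun t => ∫ x in a..b, (u t x - v t x) ^ 2)
      (∫ x in a..b, 2 * (u t x - v t x) *
        (deriv (fun s => u s x) t - deriv (fun s => v s x) t)) t := by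
  obtain ⟨Cu, hCu⟩ := hu.exists_abs_deriv_time_le hf hg hMu
  obtain ⟨Cv, hCv⟩ := hv.exists_abs_deriv_time_le hf hg hMv
  have hIoo : Ioo 0 T ⊆ Icc 0 T := Ioo_subset_Icc_self
  refine hasDerivAt_intervalIntegral_sq (w := fun t x => u t x - v t x)
    (w' := fun t x => deriv (fun s => u s x) t - deriv (fun s => v s x) t)
    (isOpen_Ioo.mem_nhds ht)
    (fun s hs => (hu.continuous (hIoo hs)).sub (hv.continuous (hIoo hs)))
    ((hu.continuous_deriv_time (Ioo_subset_Ioc_self ht)).sub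
      (hv.continuous_deriv_time (Ioo_subset_Ioc_self ht)))
    (fun s hs x => (abs_sub _ _).trans (add_le_add (hMu s (hIoo hs) x).1 (hMv s (hIoo hs) x).1))
    (fun s hs x => (abs_sub _ _).trans
      (add_le_add (hCu s (Ioo_subset_Ioc_self hs) x) (hCv s (Ioo_subset_Ioc_self hs) x)))
    fun s hs x => ?_
  exact (hu.2.2.1 s (Ioo_subset_Ioc_self hs) x).1.hasDerivAt.sub
    (hv.2.2.1 s (Ioo_subset_Ioc_self hs) x).1.hasDerivAt

theorem exists_integral_mul_deriv_time_le (hf : ContDiff ℝ 2 f) (hg : ContDiff ℝ 1 g)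
    (hL : 0 ≤ L) (hu : IsClassicalPeriodicSolutionOn f g L T u)
    (hv : IsClassicalPeriodicSolutionOn f g L T v) (hMu : BoundedWithSpatialDerivs T M u)
    (hMv : BoundedWithSpatialDerivs T M v) :
    ∃ C, ∀ t ∈ Ioc 0 T,
      ∫ x in 0..L, 2 * (u t x - v t x) * (deriv (fun s => u s x) t - deriv (fun s => v s x) t)
        ≤ C * ∫ x in 0..L, (u t x - v t x) ^ 2 := by
  obtain ⟨C, hC⟩ := exists_two_mul_nonlinearity_sub_le hf hg M
  refine ⟨C, fun t ht => ?_⟩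
  have ht' := Ioc_subset_Icc_self ht
  have hp : Periodic (fun x => u t x - v t x) L := (hu.periodic ht').sub (hv.periodic ht')
  have hcu := hu.continuous ht'
  have hcv := hv.continuous ht'
  have hcf : Continuous (deriv f) := hf.continuous_deriv one_le_two
  have hcg : Continuous g := hg.continuous
  obtain ⟨-, -, hud, -, -, -, huxxx, hueq⟩ := hu
  obtain ⟨-, -, hvd, -, -, -, hvxxx, hveq⟩ := hv
  have hcux : Continuous (deriv (u t)) :=
    continuous_iff_continuousAt.2 fun x => (hud t ht x).2.2.1.continuousAt
  have hcvx : Continuous (deriv (v t)) :=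
    continuous_iff_continuousAt.2 fun x => (hvd t ht x).2.2.1.continuousAt
  set A : ℝ → ℝ := fun x => g (u t x) - g (v t x) -
    deriv f (u t x) * (deriv (u t) x - deriv (v t) x) -
    (deriv f (u t x) - deriv f (v t x)) * deriv (v t) x
  have hdiff : ∀ x, deriv (fun s => u s x) t - deriv (fun s => v s x) t =
      A x + (deriv (deriv (u t)) x - deriv (deriv (v t)) x) -
        (deriv (deriv (deriv (u t))) x - deriv (deriv (deriv (v t))) x) := fun x => by
    linarith [hueq t ht x, hveq t ht x]
  rw [intervalIntegral.integral_congr fun x _ => by rw [hdiff x]]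
  refine hp.integral_two_mul_add_sub_le hL
    (fun x => (hud t ht x).2.1.hasDerivAt.sub (hvd t ht x).2.1.hasDerivAt)
    (fun x => (hud t ht x).2.2.1.hasDerivAt.sub (hvd t ht x).2.2.1.hasDerivAt)
    (fun x => (hud t ht x).2.2.2.hasDerivAt.sub (hvd t ht x).2.2.2.hasDerivAt)
    ((huxxx.continuous_slice ht).sub (hvxxx.continuous_slice ht))
    (by simp only [A]; fun_prop) fun x => ?_
  exact hC _ (abs_le.1 (hMu t ht' x).1) _ (abs_le.1 (hMv t ht' x).1) _ _ (hMv t ht' x).2.1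

end IsClassicalPeriodicSolutionOn

theorem uniqueness_generalized_KdVB_general
    (f g : ℝ → ℝ) (hf : ContDiff ℝ 2 f) (hg : ContDiff ℝ 1 g)
    (L T : ℝ) (hL : 0 < L)
    (u v : ℝ → ℝ → ℝ)
    (hu : IsClassicalPeriodicSolutionOn f g L T u)
    (hv : IsClassicalPeriodicSolutionOn f g L T v)
    (h0 : ∀ x : ℝ, u 0 x = v 0 x)
    (hubd : ∃ M : ℝ, ∀ t ∈ Set.Icc (0:ℝ) T, ∀ x : ℝ,
      |u t x| ≤ M ∧ |deriv (u t) x| ≤ M ∧ |deriv (deriv (u t)) x| ≤ M ∧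
        |deriv (deriv (deriv (u t))) x| ≤ M)
    (hvbd : ∃ M : ℝ, ∀ t ∈ Set.Icc (0:ℝ) T, ∀ x : ℝ,
      |v t x| ≤ M ∧ |deriv (v t) x| ≤ M ∧ |deriv (deriv (v t)) x| ≤ M ∧
        |deriv (deriv (deriv (v t))) x| ≤ M) :
    ∀ t ∈ Set.Icc (0:ℝ) T, ∀ x : ℝ, u t x = v t x := by
  obtain ⟨M₀, hM₀⟩ := hubd
  obtain ⟨M₁, hM₁⟩ := hvbd
  have hMu := BoundedWithSpatialDerivs.mono hM₀ (le_max_left M₀ M₁)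
  have hMv := BoundedWithSpatialDerivs.mono hM₁ (le_max_right M₀ M₁)
  have hf' : Continuous (deriv f) := hf.continuous_deriv one_le_two
  obtain ⟨C, hC⟩ := hu.exists_integral_mul_deriv_time_le hf hg hL.le hv hMu hMv
  have hE := nonpos_of_hasDerivAt_le_mul_self (hu.continuousOn_integral_sq_sub hv hMu hMv)
    (fun t ht => hu.hasDerivAt_integral_sq_sub hf' hg.continuous hv hMu hMv ht)
    (fun t ht => hC t (Ioo_subset_Ioc_self ht)) (by simp [h0])
  intro t ht x
  exact sub_eq_zero.1 <| Periodic.eq_zero_of_integral_sq_nonpos hL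
    ((hu.periodic ht).sub (hv.periodic ht)) ((hu.continuous ht).sub (hv.continuous ht))
    (hE t ht) x

/-- **Uniqueness** of bounded classical `L`-periodic solutions of the generalized
KdV–Burgers equation with a source: two classical solutions on `[0,T]` with the same
initial datum, both bounded together with their spatial derivatives up to order three
on `[0,T] × ℝ`, coincide. -/
theorem uniqueness_generalized_KdVB
    (f g : ℝ → ℝ) (hf : ContDiff ℝ 2 f) (hg : ContDiff ℝ 1 g)
    (L T : ℝ) (hL : 0 < L) (hT : 0 < T)
    (u v : ℝ → ℝ → ℝ)
    (hu : IsClassicalPeriodicSolutionOn f g L T u)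
    (hv : IsClassicalPeriodicSolutionOn f g L T v)
    (h0 : ∀ x : ℝ, u 0 x = v 0 x)
    (hubd : ∃ M : ℝ, ∀ t ∈ Set.Icc (0:ℝ) T, ∀ x : ℝ,
      |u t x| ≤ M ∧ |deriv (u t) x| ≤ M ∧ |deriv (deriv (u t)) x| ≤ M ∧
        |deriv (deriv (deriv (u t))) x| ≤ M)
    (hvbd : ∃ M : ℝ, ∀ t ∈ Set.Icc (0:ℝ) T, ∀ x : ℝ,
      |v t x| ≤ M ∧ |deriv (v t) x| ≤ M ∧ |deriv (deriv (v t)) x| ≤ M ∧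
        |deriv (deriv (deriv (v t))) x| ≤ M) :
    ∀ t ∈ Set.Icc (0:ℝ) T, ∀ x : ℝ, u t x = v t x :=
  uniqueness_generalized_KdVB_general f g hf hg L T hL u v hu hv h0 hubd hvbd
end
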